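/- arXiv:1909.05522 — 9 statements merged into one kernel-verified Lean document; each statement's English description precedes it below -/
import Mathlib

section
/- Let n, m be positive integers, let P be a real symmetric positive definite n×n matrix and let ε > 0 be a real number such that ε⁻¹·I − P is positive definite (equivalently, P⁻¹ − ε·I is positive definite). Then for all real n×m matrices X and W, the matrix (X + W)ᵀ P (X + W) is ≤ (in the Loewner order) the matrix Xᵀ (P⁻¹ − ε·I)⁻¹ X + ε⁻¹ · Wᵀ W; i.e., Xᵀ (P⁻¹ − ε·I)⁻¹ X + ε⁻¹ Wᵀ W − (X + W)ᵀ P (X + W) is positive semidefinite. -/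
open Matrix

/-- Lemma 2 of the paper, matrix form.
If `P` is a real symmetric positive definite `n × n` matrix and `ε > 0` is such that
`ε⁻¹ • I - P` is positive definite, then for all real `n × m` matrices `X` and `W`,
`(X + W)ᵀ P (X + W) ⪯ Xᵀ (P⁻¹ - ε • I)⁻¹ X + ε⁻¹ • Wᵀ W` in the Loewner order, i.e. the
difference is positive semidefinite. -/
theorem quadratic_cross_term_bound
    (n m : ℕ) (hn : 0 < n) (hm : 0 < m)
    (P : Matrix (Fin n) (Fin n) ℝ) (hP : P.PosDef)
    (ε : ℝ) (hε : 0 < ε)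
    (hεP : (ε⁻¹ • (1 : Matrix (Fin n) (Fin n) ℝ) - P).PosDef)
    (X W : Matrix (Fin n) (Fin m) ℝ) :
    (Xᵀ * (P⁻¹ - ε • (1 : Matrix (Fin n) (Fin n) ℝ))⁻¹ * X + ε⁻¹ • (Wᵀ * W)
      - (X + W)ᵀ * P * (X + W)).PosSemidef := by
  set B : Matrix (Fin n) (Fin n) ℝ := ε⁻¹ • (1 : Matrix (Fin n) (Fin n) ℝ) - P with hBdef
  set Q : Matrix (Fin n) (Fin n) ℝ := P⁻¹ - ε • (1 : Matrix (Fin n) (Fin n) ℝ) with hQdef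
  have hPdet : IsUnit P.det := hP.det_pos.ne'.isUnit
  have hBdet : IsUnit B.det := hεP.det_pos.ne'.isUnit
  have hPt : Pᵀ = P := by
    have := hP.isHermitian
    rwa [Matrix.IsHermitian, conjTranspose_eq_transpose_of_trivial] at this
  -- Q * P = P * Q = ε • B
  have hεB : ε • B = 1 - ε • P := by
    rw [hBdef, smul_sub, smul_smul, mul_inv_cancel₀ hε.ne', one_smul]
  have hQP : Q * P = ε • B := by
    rw [hQdef, hεB, Matrix.sub_mul, Matrix.nonsing_inv_mul _ hPdet, Matrix.smul_mul, one_mul]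
  have hPQ : P * Q = ε • B := by
    rw [hQdef, hεB, Matrix.mul_sub, Matrix.mul_nonsing_inv _ hPdet, Matrix.mul_smul, mul_one]
  -- Q is invertible
  have hQ1 : Q = ε • (P⁻¹ * B) := by
    rw [hBdef, hQdef, Matrix.mul_sub, Matrix.mul_smul, mul_one, smul_sub, smul_smul,
      mul_inv_cancel₀ hε.ne', one_smul, Matrix.nonsing_inv_mul _ hPdet]
  have hQright : Q * (ε⁻¹ • (B⁻¹ * P)) = 1 := by
    rw [hQ1, Matrix.smul_mul, Matrix.mul_smul, smul_smul, mul_inv_cancel₀ hε.ne', one_smul,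
      Matrix.mul_assoc, ← Matrix.mul_assoc B, Matrix.mul_nonsing_inv _ hBdet, Matrix.one_mul,
      Matrix.nonsing_inv_mul _ hPdet]
  have hQdet : IsUnit Q.det := Matrix.isUnit_det_of_right_inverse hQright
  have hQQi : Q * Q⁻¹ = 1 := Matrix.mul_nonsing_inv _ hQdet
  have hQiQ : Q⁻¹ * Q = 1 := Matrix.nonsing_inv_mul _ hQdet
  -- symmetry of Q⁻¹
  have hQt : Qᵀ = Q := by
    rw [hQdef, transpose_sub, transpose_nonsing_inv, hPt, transpose_smul, transpose_one]
  have hQit : (Q⁻¹)ᵀ = Q⁻¹ := by rw [transpose_nonsing_inv, hQt]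
  -- key algebraic facts
  have hA1 : ε • (Q⁻¹ * B) = P := by
    have := congrArg (fun M => Q⁻¹ * M) hQP
    simpa [← Matrix.mul_assoc, hQiQ, Matrix.mul_smul] using this.symm
  have hA2 : ε • (B * Q⁻¹) = P := by
    have := congrArg (fun M => M * Q⁻¹) hPQ
    simpa [Matrix.mul_assoc, hQQi, Matrix.smul_mul] using this.symm
  have hA3 : ε • (Q⁻¹ * P) = Q⁻¹ - P := by
    have h1 : Q * (Q⁻¹ - P) = ε • P := by
      rw [Matrix.mul_sub, hQQi, hQP, hεB, sub_sub_cancel]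
    have := congrArg (fun M => Q⁻¹ * M) h1
    simpa [← Matrix.mul_assoc, hQiQ, Matrix.mul_smul] using this.symm
  -- the difference is a congruence of B
  have key : Xᵀ * Q⁻¹ * X + ε⁻¹ • (Wᵀ * W) - (X + W)ᵀ * P * (X + W)
      = (ε • (Q⁻¹ * X) - W)ᵀ * B * (ε • (Q⁻¹ * X) - W) := by
    have expand : (ε • (Q⁻¹ * X) - W)ᵀ * B * (ε • (Q⁻¹ * X) - W)
        = Xᵀ * (ε • (Q⁻¹ * (ε • (B * Q⁻¹)))) * X - Xᵀ * (ε • (Q⁻¹ * B)) * W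
          - Wᵀ * (ε • (B * Q⁻¹)) * X + Wᵀ * B * W := by
      simp only [transpose_sub, transpose_smul, transpose_mul, hQit,
        Matrix.sub_mul, Matrix.mul_sub, Matrix.smul_mul, Matrix.mul_smul,
        Matrix.mul_assoc, smul_smul, smul_sub]
      abel
    rw [expand, hA2, hA1, hA3]
    rw [hBdef]
    simp only [transpose_add, Matrix.add_mul, Matrix.mul_add, Matrix.sub_mul, Matrix.mul_sub,
      Matrix.smul_mul, Matrix.mul_smul, Matrix.mul_one, Matrix.one_mul, Matrix.mul_assoc]
    abel
  rw [key]
  have := hεP.posSemidef.conjTranspose_mul_mul_same (ε • (Q⁻¹ * X) - W)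
  rwa [conjTranspose_eq_transpose_of_trivial] at this
end

section
/- Let A be a real n×n matrix, B a real n×m matrix with Bᵀ B invertible, and set B⁺ = (Bᵀ B)⁻¹ Bᵀ. Let P (n×n), R₁ (m×m), R₂ (n×n) be symmetric positive definite matrices and α a real scalar. Define N = P⁻¹ + B R₁⁻¹ Bᵀ + α² (I − B B⁺) R₂⁻¹ (I − B B⁺)ᵀ, assume N is invertible, and define K = −R₁⁻¹ Bᵀ N⁻¹ A, L = −α R₂⁻¹ (I − B B⁺)ᵀ N⁻¹ A, and M = N⁻¹ A. Then Aᵀ N⁻¹ A = Kᵀ R₁ K + Lᵀ R₂ L + Mᵀ P⁻¹ M. -/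
open Matrix

/-- Lemma 3 of the paper.
With `B⁺ = (Bᵀ B)⁻¹ Bᵀ`, `N = P⁻¹ + B R₁⁻¹ Bᵀ + α² (I - B B⁺) R₂⁻¹ (I - B B⁺)ᵀ` invertible,
`K = -R₁⁻¹ Bᵀ N⁻¹ A`, `L = -α R₂⁻¹ (I - B B⁺)ᵀ N⁻¹ A` and `M = N⁻¹ A`, one has
`Aᵀ N⁻¹ A = Kᵀ R₁ K + Lᵀ R₂ L + Mᵀ P⁻¹ M`. -/
theorem gain_decomposition
    (n m : ℕ) (hn : 0 < n) (hm : 0 < m)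
    (A : Matrix (Fin n) (Fin n) ℝ) (B : Matrix (Fin n) (Fin m) ℝ)
    (hBtB : IsUnit (Bᵀ * B))
    (Bp : Matrix (Fin m) (Fin n) ℝ) (hBp : Bp = (Bᵀ * B)⁻¹ * Bᵀ)
    (P : Matrix (Fin n) (Fin n) ℝ) (hP : P.PosDef)
    (R₁ : Matrix (Fin m) (Fin m) ℝ) (hR₁ : R₁.PosDef)
    (R₂ : Matrix (Fin n) (Fin n) ℝ) (hR₂ : R₂.PosDef)
    (α : ℝ)
    (N : Matrix (Fin n) (Fin n) ℝ)
    (hN : N = P⁻¹ + B * R₁⁻¹ * Bᵀ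
        + α ^ 2 • ((1 - B * Bp) * R₂⁻¹ * (1 - B * Bp)ᵀ))
    (hNinv : IsUnit N)
    (K : Matrix (Fin m) (Fin n) ℝ) (hK : K = -(R₁⁻¹ * Bᵀ * N⁻¹ * A))
    (L : Matrix (Fin n) (Fin n) ℝ) (hL : L = -(α • (R₂⁻¹ * (1 - B * Bp)ᵀ * N⁻¹ * A)))
    (M : Matrix (Fin n) (Fin n) ℝ) (hM : M = N⁻¹ * A) :
    Aᵀ * N⁻¹ * A = Kᵀ * R₁ * K + Lᵀ * R₂ * L + Mᵀ * P⁻¹ * M := by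
  have hR₁s : R₁ᵀ = R₁ := hR₁.isHermitian.eq
  have hR₂s : R₂ᵀ = R₂ := hR₂.isHermitian.eq
  have hPs : Pᵀ = P := hP.isHermitian.eq
  have hR₁u : IsUnit R₁.det := isUnit_iff_ne_zero.mpr hR₁.det_pos.ne'
  have hR₂u : IsUnit R₂.det := isUnit_iff_ne_zero.mpr hR₂.det_pos.ne'
  have hR₁i : R₁⁻¹ᵀ = R₁⁻¹ := by rw [transpose_nonsing_inv, hR₁s]
  have hR₂i : R₂⁻¹ᵀ = R₂⁻¹ := by rw [transpose_nonsing_inv, hR₂s]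
  have hPi : P⁻¹ᵀ = P⁻¹ := by rw [transpose_nonsing_inv, hPs]
  have hNs : Nᵀ = N := by
    rw [hN]
    simp only [transpose_add, transpose_smul, transpose_mul, transpose_transpose,
      hPi, hR₁i, hR₂i]
    ring_nf
    rw [Matrix.mul_assoc, Matrix.mul_assoc]
  have hNi : N⁻¹ᵀ = N⁻¹ := by rw [transpose_nonsing_inv, hNs]
  have hNd : IsUnit N.det := (Matrix.isUnit_iff_isUnit_det N).mp hNinv
  have hNN : N⁻¹ * N * N⁻¹ = N⁻¹ := by rw [nonsing_inv_mul _ hNd, Matrix.one_mul]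
  subst hK hL hM
  have eK : (-(R₁⁻¹ * Bᵀ * N⁻¹ * A))ᵀ * R₁ * -(R₁⁻¹ * Bᵀ * N⁻¹ * A)
      = Aᵀ * (N⁻¹ * (B * R₁⁻¹ * Bᵀ) * N⁻¹) * A := by
    simp only [transpose_neg, transpose_mul, transpose_transpose, hR₁i, hNi,
      Matrix.neg_mul, Matrix.mul_neg, neg_neg, Matrix.mul_assoc]
    rw [← Matrix.mul_assoc R₁ R₁⁻¹, mul_nonsing_inv _ hR₁u, Matrix.one_mul]
  have eL : (-(α • (R₂⁻¹ * (1 - B * Bp)ᵀ * N⁻¹ * A)))ᵀ * R₂ * -(α • (R₂⁻¹ * (1 - B * Bp)ᵀ * N⁻¹ * A))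
      = Aᵀ * (N⁻¹ * (α ^ 2 • ((1 - B * Bp) * R₂⁻¹ * (1 - B * Bp)ᵀ)) * N⁻¹) * A := by
    simp only [transpose_neg, transpose_smul, transpose_mul, transpose_transpose, hR₂i, hNi,
      Matrix.neg_mul, Matrix.mul_neg, neg_neg, Matrix.smul_mul, Matrix.mul_smul, smul_smul,
      smul_neg, neg_neg]
    rw [← sq]
    congr 1
    simp only [Matrix.mul_assoc]
    rw [← Matrix.mul_assoc R₂ R₂⁻¹, mul_nonsing_inv _ hR₂u, Matrix.one_mul]
  have eM : (N⁻¹ * A)ᵀ * P⁻¹ * (N⁻¹ * A) = Aᵀ * (N⁻¹ * P⁻¹ * N⁻¹) * A := by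
    simp only [transpose_mul, hNi, Matrix.mul_assoc]
  rw [eK, eL, eM]
  calc Aᵀ * N⁻¹ * A = Aᵀ * (N⁻¹ * N * N⁻¹) * A := by rw [hNN]
    _ = Aᵀ * (N⁻¹ * (P⁻¹ + B * R₁⁻¹ * Bᵀ
          + α ^ 2 • ((1 - B * Bp) * R₂⁻¹ * (1 - B * Bp)ᵀ)) * N⁻¹) * A := by rw [← hN]
    _ = _ := by
        simp only [Matrix.mul_add, Matrix.add_mul]
        abel
end

section
/- Let A be a real n×n matrix, B a real n×m matrix with Bᵀ B invertible, B⁺ = (Bᵀ B)⁻¹ Bᵀ, P, R₁, R₂ symmetric positive definite matrices of sizes n×n, m×m, n×n, α a real scalar, and Q, F symmetric n×n matrices. Define N = P⁻¹ + B R₁⁻¹ Bᵀ + α² (I − B B⁺) R₂⁻¹ (I − B B⁺)ᵀ, assume N is invertible, and define K = −R₁⁻¹ Bᵀ N⁻¹ A, L = −α R₂⁻¹ (I − B B⁺)ᵀ N⁻¹ A, M = N⁻¹ A. If P solves the discrete Riccati equation Aᵀ N⁻¹ A − P + Q + F = 0, then P = Q + F + Kᵀ R₁ K + Lᵀ R₂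 L + Mᵀ P⁻¹ M. -/
open Matrix

/-- If additionally `P` solves the discrete Riccati equation
`Aᵀ N⁻¹ A - P + Q + F = 0`, then `P = Q + F + Kᵀ R₁ K + Lᵀ R₂ L + Mᵀ P⁻¹ M`. -/
theorem riccati_solution_decomposition
    (n m : ℕ) (hn : 0 < n) (hm : 0 < m)
    (A : Matrix (Fin n) (Fin n) ℝ) (B : Matrix (Fin n) (Fin m) ℝ)
    (hBtB : IsUnit (Bᵀ * B))
    (Bp : Matrix (Fin m) (Fin n) ℝ) (hBp : Bp = (Bᵀ * B)⁻¹ * Bᵀ)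
    (P : Matrix (Fin n) (Fin n) ℝ) (hP : P.PosDef)
    (R₁ : Matrix (Fin m) (Fin m) ℝ) (hR₁ : R₁.PosDef)
    (R₂ : Matrix (Fin n) (Fin n) ℝ) (hR₂ : R₂.PosDef)
    (α : ℝ)
    (Q F : Matrix (Fin n) (Fin n) ℝ) (hQ : Q.IsHermitian) (hF : F.IsHermitian)
    (N : Matrix (Fin n) (Fin n) ℝ)
    (hN : N = P⁻¹ + B * R₁⁻¹ * Bᵀ
        + α ^ 2 • ((1 - B * Bp) * R₂⁻¹ * (1 - B * Bp)ᵀ))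
    (hNinv : IsUnit N)
    (K : Matrix (Fin m) (Fin n) ℝ) (hK : K = -(R₁⁻¹ * Bᵀ * N⁻¹ * A))
    (L : Matrix (Fin n) (Fin n) ℝ) (hL : L = -(α • (R₂⁻¹ * (1 - B * Bp)ᵀ * N⁻¹ * A)))
    (M : Matrix (Fin n) (Fin n) ℝ) (hM : M = N⁻¹ * A)
    (hRic : Aᵀ * N⁻¹ * A - P + Q + F = 0) :
    P = Q + F + Kᵀ * R₁ * K + Lᵀ * R₂ * L + Mᵀ * P⁻¹ * M := by
  have hPt : Pᵀ = P := hP.isHermitian.eq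
  have hR1t : R₁ᵀ = R₁ := hR₁.isHermitian.eq
  have hR2t : R₂ᵀ = R₂ := hR₂.isHermitian.eq
  have hR1it : (R₁⁻¹)ᵀ = R₁⁻¹ := by rw [Matrix.transpose_nonsing_inv, hR1t]
  have hR2it : (R₂⁻¹)ᵀ = R₂⁻¹ := by rw [Matrix.transpose_nonsing_inv, hR2t]
  have hPit : (P⁻¹)ᵀ = P⁻¹ := by rw [Matrix.transpose_nonsing_inv, hPt]
  have hNt : Nᵀ = N := by
    rw [hN]
    simp [transpose_add, transpose_mul, transpose_smul, hPit, hR1it, hR2it,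
      Matrix.mul_assoc]
  have hR1u : IsUnit R₁.det := isUnit_iff_ne_zero.mpr (ne_of_gt hR₁.det_pos)
  have hR2u : IsUnit R₂.det := isUnit_iff_ne_zero.mpr (ne_of_gt hR₂.det_pos)
  have hNu : IsUnit N.det := (Matrix.isUnit_iff_isUnit_det N).mp hNinv
  have cancel1 : ∀ X : Matrix (Fin m) (Fin n) ℝ,
      R₁⁻¹ * (R₁ * (R₁⁻¹ * X)) = R₁⁻¹ * X := by
    intro X
    rw [← Matrix.mul_assoc, Matrix.nonsing_inv_mul _ hR1u, Matrix.one_mul]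
  have cancel2 : ∀ X : Matrix (Fin n) (Fin n) ℝ,
      R₂⁻¹ * (R₂ * (R₂⁻¹ * X)) = R₂⁻¹ * X := by
    intro X
    rw [← Matrix.mul_assoc, Matrix.nonsing_inv_mul _ hR2u, Matrix.one_mul]
  have collapse : N * (N⁻¹ * A) = A := Matrix.mul_nonsing_inv_cancel_left _ _ hNu
  have expand : ∀ X : Matrix (Fin n) (Fin n) ℝ, N * X
      = P⁻¹ * X + B * (R₁⁻¹ * (Bᵀ * X))
        + (α * α) • ((1 - B * Bp) * (R₂⁻¹ * ((1 - B * Bp)ᵀ * X))) := by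
    intro X
    rw [hN]
    simp only [Matrix.add_mul, Matrix.smul_mul, Matrix.mul_assoc, pow_two]
  have key : Kᵀ * R₁ * K + Lᵀ * R₂ * L + Mᵀ * P⁻¹ * M = Aᵀ * N⁻¹ * A := by
    rw [hK, hL, hM]
    simp only [transpose_neg, transpose_smul, transpose_mul, transpose_transpose,
      Matrix.transpose_nonsing_inv, hNt, hR1it, hR2it, Matrix.neg_mul,
      Matrix.mul_neg, smul_neg, neg_neg, Matrix.smul_mul, Matrix.mul_smul, smul_smul,
      Matrix.mul_assoc, cancel1, cancel2]
    rw [show Aᵀ * (N⁻¹ * A) = Aᵀ * (N⁻¹ * (N * (N⁻¹ * A))) by rw [collapse]]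
    rw [expand (N⁻¹ * A)]
    simp only [Matrix.mul_add, Matrix.mul_smul]
    abel
  calc P = Aᵀ * N⁻¹ * A + Q + F := (sub_eq_zero.mp (by rw [← hRic]; abel)).symm
    _ = Q + F + (Kᵀ * R₁ * K + Lᵀ * R₂ * L + Mᵀ * P⁻¹ * M) := by rw [key]; abel
    _ = Q + F + Kᵀ * R₁ * K + Lᵀ * R₂ * L + Mᵀ * P⁻¹ * M := by abel
end

section
/- Let A be a real n×n matrix, B a real n×m matrix with Bᵀ B invertible, B⁺ = (Bᵀ B)⁻¹ Bᵀ, and let P, R₁, R₂ be symmetric positive definite matrices (sizes n×n, m×m, n×n), α a real scalar, Q a symmetric positive semidefinite n×n matrix, F a symmetric n×n matrix, and ε > 0 a real with ε⁻¹·I − P positive definite. Define N = P⁻¹ + B R₁⁻¹ Bᵀ + α² (I − B B⁺) R₂⁻¹ (I − B B⁺)ᵀ, K = −R₁⁻¹ Bᵀ N⁻¹ A, L = −α R₂⁻¹ (I − B B⁺)ᵀ N⁻¹ A, M = N⁻¹ A, A_c = A + B K, and Q₁ = Q + Kᵀ R₁ K + Lᵀ R₂ L + Mᵀ P⁻¹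 M − A_cᵀ (P⁻¹ − ε·I)⁻¹ A_c. Suppose P solves the Riccati equation Aᵀ N⁻¹ A − P + Q + F = 0. Then for every real n×n matrix ΔA with ΔAᵀ ΔA ⪯ (ε/2)·F (Loewner order) and every vector x ∈ ℝⁿ, the Lyapunov function V(z) = zᵀ P z satisfies V((A + ΔA + B K) x) − V(x) ≤ −xᵀ Q₁ x. In particular, if Q₁ is positive definite, the uncertain closed-loop system x(k+1) = (A + ΔA + B K) x(k) has strictly decreasing V along nonzero trajectories, i.e., K is a robust stabilizing gain. -/
open Matrix

private lemma psdSmul {n : ℕ} {c : ℝ} (hc : 0 ≤ c) {A : Matrix (Fin n) (Fin n) ℝ}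
    (hA : A.PosSemidef) : (c • A).PosSemidef := by
  refine posSemidef_iff_dotProduct_mulVec.mpr ⟨?_, ?_⟩
  · unfold Matrix.IsHermitian
    rw [conjTranspose_smul, hA.1]
    simp
  · intro x
    rw [smul_mulVec, dotProduct_smul, smul_eq_mul]
    exact mul_nonneg hc (hA.dotProduct_mulVec_nonneg x)

private lemma invFormula {n : ℕ} {P : Matrix (Fin n) (Fin n) ℝ} (hP : P.PosDef) {ε : ℝ}
    (hε : 0 < ε) (hεP : (ε⁻¹ • (1 : Matrix (Fin n) (Fin n) ℝ) - P).PosDef) :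
    (P⁻¹ - ε • (1 : Matrix (Fin n) (Fin n) ℝ))⁻¹
      = P + P * (ε⁻¹ • (1 : Matrix (Fin n) (Fin n) ℝ) - P)⁻¹ * P := by
  set Gi : Matrix (Fin n) (Fin n) ℝ := ε⁻¹ • (1 : Matrix (Fin n) (Fin n) ℝ) - P with hGidef
  have hGidet : IsUnit Gi.det := isUnit_iff_ne_zero.mpr hεP.det_pos.ne'
  have hPdet : IsUnit P.det := isUnit_iff_ne_zero.mpr hP.det_pos.ne'
  have hGiG : Gi⁻¹ * Gi = 1 := nonsing_inv_mul _ hGidet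
  have hGGi : Gi * Gi⁻¹ = 1 := mul_nonsing_inv _ hGidet
  have hPGi : P * Gi = Gi * P := by
    rw [hGidef, Matrix.mul_sub, Matrix.sub_mul, mul_smul_comm, smul_mul_assoc,
      Matrix.mul_one, Matrix.one_mul]
  have hPG : P * Gi⁻¹ = Gi⁻¹ * P := by
    calc P * Gi⁻¹ = Gi⁻¹ * (Gi * (P * Gi⁻¹)) := by
          rw [← Matrix.mul_assoc, hGiG, Matrix.one_mul]
      _ = Gi⁻¹ * ((Gi * P) * Gi⁻¹) := by rw [Matrix.mul_assoc]
      _ = Gi⁻¹ * ((P * Gi) * Gi⁻¹) := by rw [hPGi]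
      _ = Gi⁻¹ * (P * (Gi * Gi⁻¹)) := by rw [Matrix.mul_assoc]
      _ = Gi⁻¹ * P := by rw [hGGi, Matrix.mul_one]
  have h2 : ε⁻¹ • Gi⁻¹ - Gi⁻¹ * P = 1 := by
    rw [← hGiG, hGidef, Matrix.mul_sub, mul_smul_comm, Matrix.mul_one]
  have h3 := congrArg (ε • ·) h2
  simp only [smul_sub, smul_smul, mul_inv_cancel₀ (ne_of_gt hε), one_smul] at h3
  have hGexp : Gi⁻¹ = ε • (1 : Matrix (Fin n) (Fin n) ℝ) + ε • (Gi⁻¹ * P) :=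
    sub_eq_iff_eq_add.mp h3
  have hGrelP : Gi⁻¹ * P = ε • P + ε • (Gi⁻¹ * (P * P)) := by
    conv_lhs => rw [hGexp]
    rw [Matrix.add_mul, smul_mul_assoc, smul_mul_assoc, Matrix.one_mul, Matrix.mul_assoc]
  refine inv_eq_right_inv ?_
  have cP : ∀ X : Matrix (Fin n) (Fin n) ℝ, P⁻¹ * (P * X) = X := fun X => by
    rw [← Matrix.mul_assoc, nonsing_inv_mul _ hPdet, Matrix.one_mul]
  have cPG : ∀ X : Matrix (Fin n) (Fin n) ℝ, P * (Gi⁻¹ * X) = Gi⁻¹ * (P * X) := fun X => by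
    rw [← Matrix.mul_assoc, hPG, Matrix.mul_assoc]
  simp only [Matrix.sub_mul, Matrix.mul_add, smul_mul_assoc, Matrix.one_mul,
    Matrix.mul_assoc, nonsing_inv_mul _ hPdet, cP]
  rw [cPG, hGrelP]
  abel

private lemma keySquare {n : ℕ} (P Gi Ac ΔA : Matrix (Fin n) (Fin n) ℝ) (ε : ℝ)
    (hPt : Pᵀ = P) (hGit : Giᵀ = Gi)
    (hGiG : Gi⁻¹ * Gi = 1) (hGGi : Gi * Gi⁻¹ = 1)
    (hGi : Gi = ε⁻¹ • (1 : Matrix (Fin n) (Fin n) ℝ) - P) :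
    Acᵀ * (P + P * Gi⁻¹ * P) * Ac + ε⁻¹ • (ΔAᵀ * ΔA) - (Ac + ΔA)ᵀ * P * (Ac + ΔA)
      = (Gi⁻¹ * P * Ac - ΔA)ᵀ * Gi * (Gi⁻¹ * P * Ac - ΔA) := by
  have hGt : (Gi⁻¹)ᵀ = Gi⁻¹ := by rw [transpose_nonsing_inv, hGit]
  have cGiG : ∀ X : Matrix (Fin n) (Fin n) ℝ, Gi⁻¹ * (Gi * X) = X := fun X => by
    rw [← Matrix.mul_assoc, hGiG, Matrix.one_mul]
  have cGGi : ∀ X : Matrix (Fin n) (Fin n) ℝ, Gi * (Gi⁻¹ * X) = X := fun X => by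
    rw [← Matrix.mul_assoc, hGGi, Matrix.one_mul]
  rw [transpose_sub, transpose_add]
  simp only [transpose_mul, hPt, hGt, Matrix.sub_mul, Matrix.mul_sub, Matrix.add_mul,
    Matrix.mul_add, Matrix.mul_assoc]
  simp only [cGiG, cGGi]
  rw [hGi]
  simp only [Matrix.sub_mul, Matrix.mul_sub, smul_mul_assoc, Matrix.one_mul, mul_smul_comm]
  abel


/-- Lemma 1 of the paper: robustness of the optimal gain.
If `P` solves the Riccati equation `Aᵀ N⁻¹ A - P + Q + F = 0` and `ε⁻¹ I - P ≻ 0`, then for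
every uncertainty `ΔA` with `ΔAᵀ ΔA ⪯ (ε/2) F` and every state `x`, the Lyapunov function
`V(z) = zᵀ P z` satisfies `V((A + ΔA + B K) x) - V(x) ≤ -xᵀ Q₁ x`.  In particular, if `Q₁ ≻ 0`
then `V` strictly decreases along nonzero trajectories of `x(k+1) = (A + ΔA + B K) x(k)`. -/
theorem robust_gain_lyapunov_decrease
    (n m : ℕ) (hn : 0 < n) (hm : 0 < m)
    (A : Matrix (Fin n) (Fin n) ℝ) (B : Matrix (Fin n) (Fin m) ℝ)
    (hBtB : IsUnit (Bᵀ * B))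
    (Bp : Matrix (Fin m) (Fin n) ℝ) (hBp : Bp = (Bᵀ * B)⁻¹ * Bᵀ)
    (P : Matrix (Fin n) (Fin n) ℝ) (hP : P.PosDef)
    (R₁ : Matrix (Fin m) (Fin m) ℝ) (hR₁ : R₁.PosDef)
    (R₂ : Matrix (Fin n) (Fin n) ℝ) (hR₂ : R₂.PosDef)
    (α : ℝ)
    (Q F : Matrix (Fin n) (Fin n) ℝ) (hQ : Q.PosSemidef) (hF : F.IsHermitian)
    (ε : ℝ) (hε : 0 < ε)
    (hεP : (ε⁻¹ • (1 : Matrix (Fin n) (Fin n) ℝ) - P).PosDef)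
    (N : Matrix (Fin n) (Fin n) ℝ)
    (hN : N = P⁻¹ + B * R₁⁻¹ * Bᵀ
        + α ^ 2 • ((1 - B * Bp) * R₂⁻¹ * (1 - B * Bp)ᵀ))
    (K : Matrix (Fin m) (Fin n) ℝ) (hK : K = -(R₁⁻¹ * Bᵀ * N⁻¹ * A))
    (L : Matrix (Fin n) (Fin n) ℝ) (hL : L = -(α • (R₂⁻¹ * (1 - B * Bp)ᵀ * N⁻¹ * A)))
    (M : Matrix (Fin n) (Fin n) ℝ) (hM : M = N⁻¹ * A)
    (Ac : Matrix (Fin n) (Fin n) ℝ) (hAc : Ac = A + B * K)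
    (Q₁ : Matrix (Fin n) (Fin n) ℝ)
    (hQ₁ : Q₁ = Q + Kᵀ * R₁ * K + Lᵀ * R₂ * L + Mᵀ * P⁻¹ * M
        - Acᵀ * (P⁻¹ - ε • (1 : Matrix (Fin n) (Fin n) ℝ))⁻¹ * Ac)
    (hRic : Aᵀ * N⁻¹ * A - P + Q + F = 0)
    (V : (Fin n → ℝ) → ℝ) (hV : ∀ z, V z = z ⬝ᵥ (P *ᵥ z)) :
    (∀ ΔA : Matrix (Fin n) (Fin n) ℝ,
        ((ε / 2) • F - ΔAᵀ * ΔA).PosSemidef →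
        ∀ x : Fin n → ℝ,
          V ((A + ΔA + B * K) *ᵥ x) - V x ≤ -(x ⬝ᵥ (Q₁ *ᵥ x))) ∧
    (Q₁.PosDef →
      ∀ ΔA : Matrix (Fin n) (Fin n) ℝ,
        ((ε / 2) • F - ΔAᵀ * ΔA).PosSemidef →
        ∀ x : Fin n → ℝ, x ≠ 0 →
          V ((A + ΔA + B * K) *ᵥ x) < V x) := by
  have hPdet : IsUnit P.det := isUnit_iff_ne_zero.mpr hP.det_pos.ne'
  have hR1det : IsUnit R₁.det := isUnit_iff_ne_zero.mpr hR₁.det_pos.ne'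
  have hR2det : IsUnit R₂.det := isUnit_iff_ne_zero.mpr hR₂.det_pos.ne'
  have hPt : Pᵀ = P := by rw [← conjTranspose_eq_transpose_of_trivial]; exact hP.1
  have hR1invt : (R₁⁻¹)ᵀ = R₁⁻¹ := by
    rw [transpose_nonsing_inv,
      show R₁ᵀ = R₁ by rw [← conjTranspose_eq_transpose_of_trivial]; exact hR₁.1]
  have hR2invt : (R₂⁻¹)ᵀ = R₂⁻¹ := by
    rw [transpose_nonsing_inv,
      show R₂ᵀ = R₂ by rw [← conjTranspose_eq_transpose_of_trivial]; exact hR₂.1]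
  have hBR : (B * R₁⁻¹ * Bᵀ).PosSemidef := by
    have := hR₁.inv.posSemidef.mul_mul_conjTranspose_same B
    rwa [conjTranspose_eq_transpose_of_trivial] at this
  have hPi : ((1 - B * Bp) * R₂⁻¹ * (1 - B * Bp)ᵀ).PosSemidef := by
    have := hR₂.inv.posSemidef.mul_mul_conjTranspose_same (1 - B * Bp)
    rwa [conjTranspose_eq_transpose_of_trivial] at this
  have hNpd : N.PosDef := by
    rw [hN]
    exact (hP.inv.add_posSemidef hBR).add_posSemidef (psdSmul (sq_nonneg α) hPi)
  have hNdet : IsUnit N.det := isUnit_iff_ne_zero.mpr hNpd.det_pos.ne'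
  have hNinvt : (N⁻¹)ᵀ = N⁻¹ := by
    rw [transpose_nonsing_inv,
      show Nᵀ = N by rw [← conjTranspose_eq_transpose_of_trivial]; exact hNpd.1]
  have e1 : Kᵀ * R₁ * K = Aᵀ * (N⁻¹ * ((B * R₁⁻¹ * Bᵀ) * (N⁻¹ * A))) := by
    rw [hK]
    simp only [transpose_neg, transpose_mul, transpose_transpose, Matrix.neg_mul,
      Matrix.mul_neg, neg_neg, hR1invt, hNinvt, Matrix.mul_assoc]
    rw [nonsing_inv_mul_cancel_left _ _ hR1det]
  have e2 : Lᵀ * R₂ * L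
      = α ^ 2 • (Aᵀ * (N⁻¹ * (((1 - B * Bp) * R₂⁻¹ * (1 - B * Bp)ᵀ) * (N⁻¹ * A)))) := by
    rw [hL]
    simp only [transpose_neg, transpose_smul, transpose_mul, transpose_transpose,
      Matrix.neg_mul, Matrix.mul_neg, neg_neg, Matrix.smul_mul, Matrix.mul_smul, smul_neg,
      smul_smul, hR2invt, hNinvt, Matrix.mul_assoc, pow_two]
    rw [nonsing_inv_mul_cancel_left _ _ hR2det]
  have e3 : Mᵀ * P⁻¹ * M = Aᵀ * (N⁻¹ * (P⁻¹ * (N⁻¹ * A))) := by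
    rw [hM]; simp only [transpose_mul, hNinvt, Matrix.mul_assoc]
  have hSum : Kᵀ * R₁ * K + Lᵀ * R₂ * L + Mᵀ * P⁻¹ * M = Aᵀ * N⁻¹ * A := by
    have hNc : N * (N⁻¹ * A) = A := mul_nonsing_inv_cancel_left _ _ hNdet
    have hNy : N * (N⁻¹ * A) = P⁻¹ * (N⁻¹ * A) + B * R₁⁻¹ * Bᵀ * (N⁻¹ * A)
        + α ^ 2 • ((1 - B * Bp) * R₂⁻¹ * (1 - B * Bp)ᵀ * (N⁻¹ * A)) := by
      nth_rewrite 1 [hN]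
      rw [Matrix.add_mul, Matrix.add_mul, Matrix.smul_mul]
    rw [e1, e2, e3]
    calc Aᵀ * (N⁻¹ * ((B * R₁⁻¹ * Bᵀ) * (N⁻¹ * A)))
          + α ^ 2 • (Aᵀ * (N⁻¹ * (((1 - B * Bp) * R₂⁻¹ * (1 - B * Bp)ᵀ) * (N⁻¹ * A))))
          + Aᵀ * (N⁻¹ * (P⁻¹ * (N⁻¹ * A)))
        = Aᵀ * (N⁻¹ * (N * (N⁻¹ * A))) := by
          rw [hNy]
          simp only [Matrix.mul_add, Matrix.mul_smul, Matrix.mul_assoc]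
          abel
      _ = Aᵀ * (N⁻¹ * A) := by rw [hNc]
      _ = Aᵀ * N⁻¹ * A := by rw [Matrix.mul_assoc]
  have hPeq : P = Aᵀ * N⁻¹ * A + Q + F := by
    have h0 : Aᵀ * N⁻¹ * A + Q + F - P = 0 := by rw [← hRic]; abel
    exact (sub_eq_zero.mp h0).symm
  set Gi : Matrix (Fin n) (Fin n) ℝ := ε⁻¹ • (1 : Matrix (Fin n) (Fin n) ℝ) - P with hGidef
  have hGidet : IsUnit Gi.det := isUnit_iff_ne_zero.mpr hεP.det_pos.ne'
  have hGiG : Gi⁻¹ * Gi = 1 := nonsing_inv_mul _ hGidet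
  have hGGi : Gi * Gi⁻¹ = 1 := mul_nonsing_inv _ hGidet
  have hGit : Giᵀ = Gi := by rw [← conjTranspose_eq_transpose_of_trivial]; exact hεP.1
  have hT : (P⁻¹ - ε • (1 : Matrix (Fin n) (Fin n) ℝ))⁻¹ = P + P * Gi⁻¹ * P :=
    invFormula hP hε hεP
  have hQ₁' : Q₁ = Q + Aᵀ * N⁻¹ * A - Acᵀ * (P + P * Gi⁻¹ * P) * Ac := by
    rw [hQ₁, hT, ← hSum]; abel
  have key : ∀ ΔA : Matrix (Fin n) (Fin n) ℝ, ((ε / 2) • F - ΔAᵀ * ΔA).PosSemidef →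
      ∀ x : Fin n → ℝ, V ((A + ΔA + B * K) *ᵥ x) - V x ≤ -(x ⬝ᵥ (Q₁ *ᵥ x)) := by
    intro ΔA hΔ x
    have hD : (ΔAᵀ * ΔA).PosSemidef := by
      have := posSemidef_conjTranspose_mul_self ΔA
      rwa [conjTranspose_eq_transpose_of_trivial] at this
    have hFps : (F - ε⁻¹ • (ΔAᵀ * ΔA)).PosSemidef := by
      refine posSemidef_iff_dotProduct_mulVec.mpr ⟨?_, ?_⟩
      · show _ = _
        rw [conjTranspose_sub, conjTranspose_smul, hF, hD.1]
        simp
      · intro y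
        have hsy : star y = y := star_trivial y
        have h1 := hΔ.dotProduct_mulVec_nonneg y
        have h2 := hD.dotProduct_mulVec_nonneg y
        simp only [hsy, sub_mulVec, smul_mulVec, dotProduct_sub, dotProduct_smul,
          smul_eq_mul] at h1 h2 ⊢
        have ha : 0 ≤ y ⬝ᵥ F *ᵥ y := by nlinarith
        have hb : ε⁻¹ * (y ⬝ᵥ (ΔAᵀ * ΔA) *ᵥ y) ≤ ε⁻¹ * (ε / 2 * (y ⬝ᵥ F *ᵥ y)) := by
          apply mul_le_mul_of_nonneg_left _ (inv_pos.mpr hε).le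
          linarith
        have hc : ε⁻¹ * (ε / 2 * (y ⬝ᵥ F *ᵥ y)) = (y ⬝ᵥ F *ᵥ y) / 2 := by
          field_simp
        linarith
    have hW : ((Gi⁻¹ * P * Ac - ΔA)ᵀ * Gi * (Gi⁻¹ * P * Ac - ΔA)).PosSemidef := by
      have := hεP.posSemidef.conjTranspose_mul_mul_same (Gi⁻¹ * P * Ac - ΔA)
      rwa [conjTranspose_eq_transpose_of_trivial] at this
    have hKI := keySquare P Gi Ac ΔA ε hPt hGit hGiG hGGi hGidef
    have hMbig : (Ac + ΔA)ᵀ * P * (Ac + ΔA) - P + Q₁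
        = -((Gi⁻¹ * P * Ac - ΔA)ᵀ * Gi * (Gi⁻¹ * P * Ac - ΔA))
          - (F - ε⁻¹ • (ΔAᵀ * ΔA)) := by
      rw [hQ₁']
      nth_rewrite 2 [hPeq]
      rw [← hKI]
      abel
    rw [hV, hV]
    have hfold : A + ΔA + B * K = Ac + ΔA := by rw [hAc]; abel
    rw [hfold]
    have hquad : ((Ac + ΔA) *ᵥ x) ⬝ᵥ (P *ᵥ ((Ac + ΔA) *ᵥ x))
        = x ⬝ᵥ (((Ac + ΔA)ᵀ * P * (Ac + ΔA)) *ᵥ x) := by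
      calc ((Ac + ΔA) *ᵥ x) ⬝ᵥ (P *ᵥ ((Ac + ΔA) *ᵥ x))
          = ((Ac + ΔA) *ᵥ x) ⬝ᵥ ((P * (Ac + ΔA)) *ᵥ x) := by rw [mulVec_mulVec]
        _ = (x ᵥ* (Ac + ΔA)ᵀ) ⬝ᵥ ((P * (Ac + ΔA)) *ᵥ x) := by rw [vecMul_transpose]
        _ = x ⬝ᵥ ((Ac + ΔA)ᵀ *ᵥ ((P * (Ac + ΔA)) *ᵥ x)) := by rw [← dotProduct_mulVec]
        _ = x ⬝ᵥ (((Ac + ΔA)ᵀ * (P * (Ac + ΔA))) *ᵥ x) := by rw [mulVec_mulVec]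
        _ = x ⬝ᵥ (((Ac + ΔA)ᵀ * P * (Ac + ΔA)) *ᵥ x) := by rw [Matrix.mul_assoc]
    rw [hquad]
    have hsplit := congrArg (fun Z : Matrix (Fin n) (Fin n) ℝ => x ⬝ᵥ (Z *ᵥ x)) hMbig
    simp only [sub_mulVec, add_mulVec, neg_mulVec, smul_mulVec, dotProduct_sub,
      dotProduct_add, dotProduct_neg, dotProduct_smul, smul_eq_mul] at hsplit
    have hsx : star x = x := star_trivial x
    have h1 := hW.dotProduct_mulVec_nonneg x
    have h2 := hFps.dotProduct_mulVec_nonneg x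
    simp only [hsx, sub_mulVec, smul_mulVec, dotProduct_sub, dotProduct_smul,
      smul_eq_mul] at h1 h2
    linarith
  refine ⟨key, ?_⟩
  intro hQd ΔA hΔ x hx
  have h := key ΔA hΔ x
  have hq := hQd.dotProduct_mulVec_pos hx
  rw [star_trivial] at hq
  linarith
end

section
/- Under the hypotheses of the robust-stability lemma — A, B, B⁺, P, R₁, R₂, α, Q, F, ε, N, K, L, M, A_c, Q₁ as there, with P solving Aᵀ N⁻¹ A − P + Q + F = 0, ε⁻¹·I − P positive definite, Q₁ positive definite, and ΔA a real n×n matrix with ΔAᵀ ΔA ⪯ (ε/2)·F — let x : ℕ → ℝⁿ satisfy x(k+1) = (A + ΔA + B K) x(k), and set V(z) = zᵀ P z and ρ = 1 − λ_min(Q₁)/λ_max(P). Then 0 ≤ ρ < 1 and V(x(k)) ≤ ρᵏ · V(x(0)) for all k ∈ ℕ; in particular x(k) → 0 as k → ∞. -/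
open Matrix

set_option maxHeartbeats 1600000

private lemma psd_smul_real {n : ℕ} {X : Matrix (Fin n) (Fin n) ℝ} (hX : X.PosSemidef) {c : ℝ}
    (hc : 0 ≤ c) : (c • X).PosSemidef := by
  refine Matrix.PosSemidef.of_dotProduct_mulVec_nonneg ?_ fun z => ?_
  · unfold Matrix.IsHermitian
    rw [conjTranspose_smul, hX.1.eq]
    simp
  · rw [Matrix.smul_mulVec, dotProduct_smul, smul_eq_mul]
    exact mul_nonneg hc (hX.dotProduct_mulVec_nonneg z)

private lemma psd_quad_real {n : ℕ} {X : Matrix (Fin n) (Fin n) ℝ} (hX : X.PosSemidef)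
    (z : Fin n → ℝ) : 0 ≤ z ⬝ᵥ (X *ᵥ z) := by
  have h := hX.dotProduct_mulVec_nonneg z
  have hs : star z = z := by funext i; simp
  rwa [hs] at h

private lemma rayleigh_decomp {n : ℕ} (S : Matrix (Fin n) (Fin n) ℝ) (hS : S.IsHermitian)
    (z : Fin n → ℝ) :
    ∃ w : Fin n → ℝ, z ⬝ᵥ (S *ᵥ z) = ∑ i, hS.eigenvalues i * (w i)^2 ∧
      z ⬝ᵥ z = ∑ i, (w i)^2 := by
  set U : Matrix (Fin n) (Fin n) ℝ :=
    (Matrix.IsHermitian.eigenvectorUnitary hS : Matrix (Fin n) (Fin n) ℝ) with hUdef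
  have hU1 : U * star U = 1 :=
    (Matrix.mem_unitaryGroup_iff).mp (Matrix.IsHermitian.eigenvectorUnitary hS).2
  have hstarU : star U = Uᵀ := by
    rw [Matrix.star_eq_conjTranspose, Matrix.conjTranspose_eq_transpose_of_trivial]
  refine ⟨Uᵀ *ᵥ z, ?_, ?_⟩
  · conv_lhs => rw [hS.spectral_theorem, Unitary.conjStarAlgAut_apply, ← hUdef]
    rw [hstarU]
    rw [← Matrix.mulVec_mulVec, ← Matrix.mulVec_mulVec]
    rw [Matrix.dotProduct_mulVec z U, ← Matrix.mulVec_transpose]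
    have hdiag : Matrix.diagonal (RCLike.ofReal ∘ hS.eigenvalues) =
        Matrix.diagonal hS.eigenvalues := by congr 1
    rw [hdiag]
    simp only [Matrix.mulVec_diagonal, dotProduct]
    exact Finset.sum_congr rfl fun i _ => by ring
  · have key : (Uᵀ *ᵥ z) ⬝ᵥ (Uᵀ *ᵥ z) = z ⬝ᵥ z := by
      conv_lhs => rw [Matrix.mulVec_transpose U z]
      rw [← Matrix.dotProduct_mulVec z U, ← Matrix.mulVec_transpose U z, Matrix.mulVec_mulVec,
        ← hstarU, hU1, Matrix.one_mulVec]
    rw [← key]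
    simp [dotProduct, pow_two]

private lemma rayleigh_bounds {n : ℕ} (hn : 0 < n) (S : Matrix (Fin n) (Fin n) ℝ)
    (hS : S.IsHermitian) (z : Fin n → ℝ) :
    (⨅ i, hS.eigenvalues i) * (z ⬝ᵥ z) ≤ z ⬝ᵥ (S *ᵥ z) ∧
      z ⬝ᵥ (S *ᵥ z) ≤ (⨆ i, hS.eigenvalues i) * (z ⬝ᵥ z) := by
  haveI : Nonempty (Fin n) := ⟨⟨0, hn⟩⟩
  obtain ⟨w, h1, h2⟩ := rayleigh_decomp S hS z
  rw [h1, h2, Finset.mul_sum, Finset.mul_sum]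
  constructor
  · refine Finset.sum_le_sum fun i _ => ?_
    exact mul_le_mul_of_nonneg_right (ciInf_le (Finite.bddBelow_range _) i) (sq_nonneg _)
  · refine Finset.sum_le_sum fun i _ => ?_
    exact mul_le_mul_of_nonneg_right (le_ciSup (Finite.bddAbove_range _) i) (sq_nonneg _)

/-- Under the hypotheses of the robust-stability lemma, with `Q₁ ≻ 0`, any
trajectory of the uncertain closed loop `x(k+1) = (A + ΔA + B K) x(k)` satisfies
`V(x(k)) ≤ ρᵏ V(x(0))` with `ρ = 1 - λ_min(Q₁)/λ_max(P) ∈ [0,1)`; in particular `x(k) → 0`. -/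
theorem robust_closed_loop_geometric_decay
    (n m : ℕ) (hn : 0 < n) (hm : 0 < m)
    (A : Matrix (Fin n) (Fin n) ℝ) (B : Matrix (Fin n) (Fin m) ℝ)
    (hBtB : IsUnit (Bᵀ * B))
    (Bp : Matrix (Fin m) (Fin n) ℝ) (hBp : Bp = (Bᵀ * B)⁻¹ * Bᵀ)
    (P : Matrix (Fin n) (Fin n) ℝ) (hP : P.PosDef)
    (R₁ : Matrix (Fin m) (Fin m) ℝ) (hR₁ : R₁.PosDef)
    (R₂ : Matrix (Fin n) (Fin n) ℝ) (hR₂ : R₂.PosDef)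
    (α : ℝ)
    (Q F : Matrix (Fin n) (Fin n) ℝ) (hQ : Q.PosSemidef) (hF : F.IsHermitian)
    (ε : ℝ) (hε : 0 < ε)
    (hεP : (ε⁻¹ • (1 : Matrix (Fin n) (Fin n) ℝ) - P).PosDef)
    (N : Matrix (Fin n) (Fin n) ℝ)
    (hN : N = P⁻¹ + B * R₁⁻¹ * Bᵀ
        + α ^ 2 • ((1 - B * Bp) * R₂⁻¹ * (1 - B * Bp)ᵀ))
    (K : Matrix (Fin m) (Fin n) ℝ) (hK : K = -(R₁⁻¹ * Bᵀ * N⁻¹ * A))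
    (L : Matrix (Fin n) (Fin n) ℝ) (hL : L = -(α • (R₂⁻¹ * (1 - B * Bp)ᵀ * N⁻¹ * A)))
    (M : Matrix (Fin n) (Fin n) ℝ) (hM : M = N⁻¹ * A)
    (Ac : Matrix (Fin n) (Fin n) ℝ) (hAc : Ac = A + B * K)
    (Q₁ : Matrix (Fin n) (Fin n) ℝ)
    (hQ₁ : Q₁ = Q + Kᵀ * R₁ * K + Lᵀ * R₂ * L + Mᵀ * P⁻¹ * M
        - Acᵀ * (P⁻¹ - ε • (1 : Matrix (Fin n) (Fin n) ℝ))⁻¹ * Ac)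
    (hRic : Aᵀ * N⁻¹ * A - P + Q + F = 0)
    (hQ₁pd : Q₁.PosDef)
    (ΔA : Matrix (Fin n) (Fin n) ℝ)
    (hΔA : ((ε / 2) • F - ΔAᵀ * ΔA).PosSemidef)
    (x : ℕ → Fin n → ℝ)
    (hx : ∀ k : ℕ, x (k + 1) = (A + ΔA + B * K) *ᵥ x k)
    (V : (Fin n → ℝ) → ℝ) (hV : ∀ z, V z = z ⬝ᵥ (P *ᵥ z))
    (ρ : ℝ)
    (hρ : ρ = 1 - (⨅ i, hQ₁pd.1.eigenvalues i) / (⨆ i, hP.1.eigenvalues i)) :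
    0 ≤ ρ ∧ ρ < 1 ∧ (∀ k : ℕ, V (x k) ≤ ρ ^ k * V (x 0)) ∧
      Filter.Tendsto x Filter.atTop (nhds 0) := by
  haveI : Nonempty (Fin n) := ⟨⟨0, hn⟩⟩
  have e2t : ∀ {p : ℕ} (X : Matrix (Fin p) (Fin p) ℝ), X.IsHermitian → Xᵀ = X := fun X hX => by
    rw [← Matrix.conjTranspose_eq_transpose_of_trivial]; exact hX.eq
  -- N is positive definite
  have hBR : (B * R₁⁻¹ * Bᵀ).PosSemidef := by
    have h := hR₁.inv.posSemidef.mul_mul_conjTranspose_same B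
    rwa [Matrix.conjTranspose_eq_transpose_of_trivial] at h
  have hBR2 : ((1 - B * Bp) * R₂⁻¹ * (1 - B * Bp)ᵀ).PosSemidef := by
    have h := hR₂.inv.posSemidef.mul_mul_conjTranspose_same (1 - B * Bp)
    rwa [Matrix.conjTranspose_eq_transpose_of_trivial] at h
  have hNpd : N.PosDef := by
    rw [hN]
    exact (hP.inv.add_posSemidef hBR).add_posSemidef (psd_smul_real hBR2 (sq_nonneg α))
  -- transpose facts
  have hPt : Pᵀ = P := e2t _ hP.1
  have hPiT : (P⁻¹)ᵀ = P⁻¹ := e2t _ hP.inv.1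
  have hR1iT : (R₁⁻¹)ᵀ = R₁⁻¹ := e2t _ hR₁.inv.1
  have hR2iT : (R₂⁻¹)ᵀ = R₂⁻¹ := e2t _ hR₂.inv.1
  have hNiT : (N⁻¹)ᵀ = N⁻¹ := e2t _ hNpd.inv.1
  -- invertibility
  have hNdet := (Matrix.isUnit_iff_isUnit_det _).mp hNpd.isUnit
  have hPdet := (Matrix.isUnit_iff_isUnit_det _).mp hP.isUnit
  have hc1 : ∀ (X : Matrix (Fin m) (Fin n) ℝ), R₁ * (R₁⁻¹ * X) = X := fun X => by
    rw [← Matrix.mul_assoc,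
      Matrix.mul_nonsing_inv _ ((Matrix.isUnit_iff_isUnit_det _).mp hR₁.isUnit), Matrix.one_mul]
  have hc2 : ∀ (X : Matrix (Fin n) (Fin n) ℝ), R₂ * (R₂⁻¹ * X) = X := fun X => by
    rw [← Matrix.mul_assoc,
      Matrix.mul_nonsing_inv _ ((Matrix.isUnit_iff_isUnit_det _).mp hR₂.isUnit), Matrix.one_mul]
  have hcN : N * (N⁻¹ * A) = A := by
    rw [← Matrix.mul_assoc, Matrix.mul_nonsing_inv _ hNdet, Matrix.one_mul]
  -- Identity 1 : the gains recombine into Aᵀ N⁻¹ A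
  have hsum : Kᵀ * R₁ * K + Lᵀ * R₂ * L + Mᵀ * P⁻¹ * M = Aᵀ * N⁻¹ * A := by
    calc Kᵀ * R₁ * K + Lᵀ * R₂ * L + Mᵀ * P⁻¹ * M
        = Aᵀ * (N⁻¹ * ((P⁻¹ + B * R₁⁻¹ * Bᵀ
            + α ^ 2 • ((1 - B * Bp) * R₂⁻¹ * (1 - B * Bp)ᵀ)) * (N⁻¹ * A))) := by
          simp only [hK, hL, hM, Matrix.transpose_neg, Matrix.transpose_smul,
            Matrix.transpose_mul, Matrix.transpose_transpose, hNiT, hR1iT, hR2iT, hPiT,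
            Matrix.neg_mul, Matrix.mul_neg, neg_neg, Matrix.smul_mul, Matrix.mul_smul, smul_smul,
            Matrix.add_mul, Matrix.mul_add, Matrix.mul_assoc, hc1, hc2, pow_two]
          module
      _ = Aᵀ * (N⁻¹ * (N * (N⁻¹ * A))) := by rw [← hN]
      _ = Aᵀ * N⁻¹ * A := by rw [hcN, Matrix.mul_assoc]
  -- the matrices J and W
  set J : Matrix (Fin n) (Fin n) ℝ := ε⁻¹ • (1 : Matrix (Fin n) (Fin n) ℝ) - P with hJdef
  set W : Matrix (Fin n) (Fin n) ℝ := J⁻¹ with hWdef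
  have hJdet := (Matrix.isUnit_iff_isUnit_det _).mp hεP.isUnit
  have hJW : J * W = 1 := Matrix.mul_nonsing_inv _ hJdet
  have hWJ : W * J = 1 := Matrix.nonsing_inv_mul _ hJdet
  have hJW' : ∀ X : Matrix (Fin n) (Fin n) ℝ, J * (W * X) = X := fun X => by
    rw [← Matrix.mul_assoc, hJW, Matrix.one_mul]
  have hWJ' : ∀ X : Matrix (Fin n) (Fin n) ℝ, W * (J * X) = X := fun X => by
    rw [← Matrix.mul_assoc, hWJ, Matrix.one_mul]
  have hJt : Jᵀ = J := e2t _ hεP.1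
  have hJexp : ∀ X : Matrix (Fin n) (Fin n) ℝ, J * X = ε⁻¹ • X - P * X := fun X => by
    rw [hJdef, Matrix.sub_mul, Matrix.smul_mul, Matrix.one_mul]
  -- Identity 3 : the inverse (P⁻¹ - ε I)⁻¹ equals P + P W P
  have hG : (P⁻¹ - ε • (1 : Matrix (Fin n) (Fin n) ℝ))⁻¹ = P + P * W * P := by
    have hPinv : P⁻¹ * P = 1 := Matrix.nonsing_inv_mul _ hPdet
    have hPc : ∀ X : Matrix (Fin n) (Fin n) ℝ, P⁻¹ * (P * X) = X := fun X => by
      rw [← Matrix.mul_assoc, hPinv, Matrix.one_mul]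
    apply Matrix.inv_eq_right_inv
    have expand : (P⁻¹ - ε • (1 : Matrix (Fin n) (Fin n) ℝ)) * (P + P * W * P)
        = 1 + W * P - ε • P - ε • (P * (W * P)) := by
      simp only [Matrix.sub_mul, Matrix.mul_add, Matrix.smul_mul, Matrix.one_mul, hPinv, hPc,
        Matrix.mul_assoc]
      module
    rw [expand]
    have hJWP : J * (W * P) = P := hJW' P
    have h4 : W * P - ε • (P * (W * P)) = ε • P := by
      calc W * P - ε • (P * (W * P))
          = ε • ((ε⁻¹ • (1 : Matrix (Fin n) (Fin n) ℝ) - P) * (W * P)) := by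
            simp only [Matrix.sub_mul, Matrix.smul_mul, Matrix.one_mul, smul_sub, smul_smul,
              mul_inv_cancel₀ hε.ne', one_smul]
        _ = ε • (J * (W * P)) := by rw [← hJdef]
        _ = ε • P := by rw [hJWP]
    calc (1 : Matrix (Fin n) (Fin n) ℝ) + W * P - ε • P - ε • (P * (W * P))
        = 1 + (W * P - ε • (P * (W * P))) - ε • P := by abel
      _ = 1 := by rw [h4]; abel
  -- Identity 2 : P - Q₁ = F + Acᵀ (P⁻¹ - εI)⁻¹ Ac
  have hF' : P - Q - Aᵀ * N⁻¹ * A = F := by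
    rw [← sub_eq_zero,
      show P - Q - Aᵀ * N⁻¹ * A - F = -(Aᵀ * N⁻¹ * A - P + Q + F) by abel, hRic, neg_zero]
  have hPQ : P - Q₁ = F + Acᵀ * (P⁻¹ - ε • (1 : Matrix (Fin n) (Fin n) ℝ))⁻¹ * Ac := by
    calc P - Q₁
        = (P - Q - (Kᵀ * R₁ * K + Lᵀ * R₂ * L + Mᵀ * P⁻¹ * M))
          + Acᵀ * (P⁻¹ - ε • (1 : Matrix (Fin n) (Fin n) ℝ))⁻¹ * Ac := by rw [hQ₁]; abel
      _ = (P - Q - Aᵀ * N⁻¹ * A)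
          + Acᵀ * (P⁻¹ - ε • (1 : Matrix (Fin n) (Fin n) ℝ))⁻¹ * Ac := by rw [hsum]
      _ = F + Acᵀ * (P⁻¹ - ε • (1 : Matrix (Fin n) (Fin n) ℝ))⁻¹ * Ac := by rw [hF']
  -- the key square completion identity
  set Sq : Matrix (Fin n) (Fin n) ℝ := P * Ac - J * ΔA with hSqdef
  have hkey : P - Q₁ - (Ac + ΔA)ᵀ * P * (Ac + ΔA)
      = Sqᵀ * W * Sq + (2 / ε) • ((ε / 2) • F - ΔAᵀ * ΔA) + ε⁻¹ • (ΔAᵀ * ΔA) := by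
    rw [hPQ, hG, hSqdef]
    have hscal : (2 / ε) • ((ε / 2) • F - ΔAᵀ * ΔA) = F - (2 / ε) • (ΔAᵀ * ΔA) := by
      rw [smul_sub, smul_smul, show (2 / ε) * (ε / 2) = 1 by field_simp, one_smul]
    rw [hscal]
    simp only [Matrix.transpose_sub, Matrix.transpose_add, Matrix.transpose_mul, hPt, hJt,
      Matrix.sub_mul, Matrix.mul_sub, Matrix.add_mul, Matrix.mul_add,
      Matrix.smul_mul, Matrix.mul_smul, Matrix.mul_assoc, hJW', hWJ']
    rw [hJexp ΔA]
    simp only [Matrix.mul_sub, Matrix.mul_smul]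
    module
  -- positive semidefiniteness of the decrement
  have hWpd : W.PosDef := hεP.inv
  have hDpsd : (P - Q₁ - (Ac + ΔA)ᵀ * P * (Ac + ΔA)).PosSemidef := by
    rw [hkey]
    refine Matrix.PosSemidef.add (Matrix.PosSemidef.add ?_ ?_) ?_
    · have h := hWpd.posSemidef.conjTranspose_mul_mul_same Sq
      rwa [Matrix.conjTranspose_eq_transpose_of_trivial] at h
    · exact psd_smul_real hΔA (by positivity)
    · refine psd_smul_real ?_ (by positivity)
      have h := Matrix.posSemidef_conjTranspose_mul_self ΔA
      rwa [Matrix.conjTranspose_eq_transpose_of_trivial] at h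
  have hT : A + ΔA + B * K = Ac + ΔA := by rw [hAc]; abel
  -- quadratic-form inequalities
  have hquadT : ∀ z : Fin n → ℝ,
      z ⬝ᵥ (((Ac + ΔA)ᵀ * P * (Ac + ΔA)) *ᵥ z)
        = ((Ac + ΔA) *ᵥ z) ⬝ᵥ (P *ᵥ ((Ac + ΔA) *ᵥ z)) := by
    intro z
    rw [Matrix.mul_assoc, ← Matrix.mulVec_mulVec, Matrix.dotProduct_mulVec z,
      ← Matrix.mulVec_transpose, Matrix.transpose_transpose, ← Matrix.mulVec_mulVec]
  have hstep0 : ∀ z : Fin n → ℝ,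
      ((Ac + ΔA) *ᵥ z) ⬝ᵥ (P *ᵥ ((Ac + ΔA) *ᵥ z))
        ≤ z ⬝ᵥ (P *ᵥ z) - z ⬝ᵥ (Q₁ *ᵥ z) := by
    intro z
    have h0 := psd_quad_real hDpsd z
    rw [Matrix.sub_mulVec, Matrix.sub_mulVec, dotProduct_sub, dotProduct_sub, hquadT z] at h0
    linarith
  -- eigenvalue quantities
  set lm : ℝ := ⨅ i, hQ₁pd.1.eigenvalues i with hlm
  set lM : ℝ := ⨆ i, hP.1.eigenvalues i with hlM
  have hQray := fun z => rayleigh_bounds hn Q₁ hQ₁pd.1 z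
  have hPray := fun z => rayleigh_bounds hn P hP.1 z
  have hlm_pos : 0 < lm := by
    obtain ⟨i₁, hi₁⟩ := Finite.exists_min hQ₁pd.1.eigenvalues
    exact lt_of_lt_of_le (hQ₁pd.eigenvalues_pos i₁) (le_ciInf hi₁)
  have hlM_pos : 0 < lM := by
    have i0 : Fin n := ⟨0, hn⟩
    exact lt_of_lt_of_le (hP.eigenvalues_pos i0)
      (le_ciSup (Finite.bddAbove_range _) i0)
  -- λ_min(Q₁) ≤ λ_max(P)
  have hPmQ : (P - Q₁).PosSemidef := by
    have hTpsd : ((Ac + ΔA)ᵀ * P * (Ac + ΔA)).PosSemidef := by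
      have h := hP.posSemidef.conjTranspose_mul_mul_same (Ac + ΔA)
      rwa [Matrix.conjTranspose_eq_transpose_of_trivial] at h
    have h := hDpsd.add hTpsd
    rwa [sub_add_cancel] at h
  have hlmM : lm ≤ lM := by
    set e : Fin n → ℝ := Pi.single ⟨0, hn⟩ 1 with hedef
    have hee : e ⬝ᵥ e = 1 := by
      simp [hedef, dotProduct, Pi.single_apply]
    have h1 : lm * (e ⬝ᵥ e) ≤ e ⬝ᵥ (Q₁ *ᵥ e) := (hQray e).1
    have h2 : e ⬝ᵥ (Q₁ *ᵥ e) ≤ e ⬝ᵥ (P *ᵥ e) := by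
      have h := psd_quad_real hPmQ e
      rw [Matrix.sub_mulVec, dotProduct_sub] at h
      linarith
    have h3 : e ⬝ᵥ (P *ᵥ e) ≤ lM * (e ⬝ᵥ e) := (hPray e).2
    rw [hee] at h1 h3
    linarith
  have hρ0 : 0 ≤ ρ := by
    rw [hρ, sub_nonneg]
    exact (div_le_one hlM_pos).mpr hlmM
  have hρ1 : ρ < 1 := by
    rw [hρ]
    have := div_pos hlm_pos hlM_pos
    linarith
  -- one-step decrease of V
  have hstep : ∀ z : Fin n → ℝ,
      ((Ac + ΔA) *ᵥ z) ⬝ᵥ (P *ᵥ ((Ac + ΔA) *ᵥ z)) ≤ ρ * (z ⬝ᵥ (P *ᵥ z)) := by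
    intro z
    have hzz : (0:ℝ) ≤ z ⬝ᵥ z := by
      have : z ⬝ᵥ z = ∑ i, (z i)^2 := by simp [dotProduct, pow_two]
      rw [this]; positivity
    have hQlow : (lm / lM) * (z ⬝ᵥ (P *ᵥ z)) ≤ z ⬝ᵥ (Q₁ *ᵥ z) := by
      have h1 : (lm / lM) * (z ⬝ᵥ (P *ᵥ z)) ≤ (lm / lM) * (lM * (z ⬝ᵥ z)) :=
        mul_le_mul_of_nonneg_left (hPray z).2 (le_of_lt (div_pos hlm_pos hlM_pos))
      have h2 : (lm / lM) * (lM * (z ⬝ᵥ z)) = lm * (z ⬝ᵥ z) := by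
        rw [← mul_assoc, div_mul_cancel₀ _ hlM_pos.ne']
      have h3 := (hQray z).1
      linarith
    have h4 := hstep0 z
    have h5 : ρ * (z ⬝ᵥ (P *ᵥ z)) = z ⬝ᵥ (P *ᵥ z) - (lm / lM) * (z ⬝ᵥ (P *ᵥ z)) := by
      rw [hρ]; ring
    linarith
  -- geometric decay
  have hdecay : ∀ k : ℕ, V (x k) ≤ ρ ^ k * V (x 0) := by
    intro k
    induction k with
    | zero => simp
    | succ k ih =>
      have hx' : x (k + 1) = (Ac + ΔA) *ᵥ x k := by rw [hx k, hT]
      have h1 : V (x (k + 1)) ≤ ρ * V (x k) := by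
        rw [hV, hV, hx']
        exact hstep (x k)
      calc V (x (k + 1)) ≤ ρ * V (x k) := h1
        _ ≤ ρ * (ρ ^ k * V (x 0)) := mul_le_mul_of_nonneg_left ih hρ0
        _ = ρ ^ (k + 1) * V (x 0) := by ring
  refine ⟨hρ0, hρ1, hdecay, ?_⟩
  -- convergence to zero
  set lPm : ℝ := ⨅ i, hP.1.eigenvalues i with hlPm
  have hlPm_pos : 0 < lPm := by
    obtain ⟨i₁, hi₁⟩ := Finite.exists_min hP.1.eigenvalues
    exact lt_of_lt_of_le (hP.eigenvalues_pos i₁) (le_ciInf hi₁)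
  set C : ℝ := V (x 0) / lPm with hC
  have hbound : ∀ (k : ℕ) (i : Fin n), (x k i)^2 ≤ ρ ^ k * C := by
    intro k i
    have h1 : (x k i)^2 ≤ (x k) ⬝ᵥ (x k) := by
      have : (x k) ⬝ᵥ (x k) = ∑ j, (x k j)^2 := by simp [dotProduct, pow_two]
      rw [this]
      exact Finset.single_le_sum (fun j _ => sq_nonneg (x k j)) (Finset.mem_univ i)
    have h2 : lPm * ((x k) ⬝ᵥ (x k)) ≤ V (x k) := by
      rw [hV]; exact (rayleigh_bounds hn P hP.1 (x k)).1
    have h3 : (x k) ⬝ᵥ (x k) ≤ V (x k) / lPm := by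
      rw [le_div_iff₀ hlPm_pos]; linarith
    have h4 : V (x k) / lPm ≤ (ρ ^ k * V (x 0)) / lPm := by
      gcongr
      exact hdecay k
    have h5 : (ρ ^ k * V (x 0)) / lPm = ρ ^ k * C := by rw [hC]; ring
    linarith
  have hCtend : Filter.Tendsto (fun k : ℕ => Real.sqrt (ρ ^ k * C)) Filter.atTop (nhds 0) := by
    have h1 : Filter.Tendsto (fun k : ℕ => ρ ^ k * C) Filter.atTop (nhds 0) := by
      simpa using (tendsto_pow_atTop_nhds_zero_of_lt_one hρ0 hρ1).mul_const C
    simpa using h1.sqrt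
  rw [tendsto_pi_nhds]
  intro i
  simp only [Pi.zero_apply]
  refine squeeze_zero_norm (fun k => ?_) hCtend
  rw [Real.norm_eq_abs, ← Real.sqrt_sq_eq_abs]
  exact Real.sqrt_le_sqrt (by simpa using hbound k i)
end

section
/- Let A, B, B⁺, P, R₁, R₂, α, Q, F, ε, N, K, L, M, A_c, Q₁ be as in the robust-stability lemma, with P solving the Riccati equation Aᵀ N⁻¹ A − P + Q + F = 0, ε⁻¹·I − P positive definite, and Q₁ positive definite. Let ΔA be a real n×n matrix with ΔAᵀ ΔA ⪯ (ε/2)·F. Define ξ₁ = λ_min(Q₁)/2 and ξ₂ = 2‖A_cᵀ (P⁻¹ − ε·I)⁻¹ B K‖² / λ_min(Q₁) + ‖Kᵀ Bᵀ (P⁻¹ − ε·I)⁻¹ B K‖, where ‖·‖ denotes the operator norm induced by the Euclidean norm. Then for all vectors x, e ∈ ℝⁿ, with x⁺ = (A + ΔA) x + B K (x + e) and V(z) = zᵀ P z, one has V(x⁺) − V(x) ≤ −ξ₁ ‖x‖² + ξ₂ ‖e‖². -/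
open Matrix

/-- The Euclidean norm of a vector in `ℝⁿ`. -/
noncomputable def vecNorm {n : ℕ} (x : Fin n → ℝ) : ℝ := Real.sqrt (x ⬝ᵥ x)

/-- The operator norm of a square real matrix induced by the Euclidean norm. -/
noncomputable def opNorm {n : ℕ} (M : Matrix (Fin n) (Fin n) ℝ) : ℝ :=
  ‖Matrix.toEuclideanCLM (𝕜 := ℝ) M‖

namespace RobustAux

variable {n : ℕ}

lemma dot_self_nonneg (x : Fin n → ℝ) : 0 ≤ x ⬝ᵥ x :=
  Finset.sum_nonneg fun i _ => mul_self_nonneg (x i)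

lemma vecNorm_nonneg (x : Fin n → ℝ) : 0 ≤ vecNorm x := Real.sqrt_nonneg _

lemma vecNorm_sq (x : Fin n → ℝ) : vecNorm x ^ 2 = x ⬝ᵥ x :=
  Real.sq_sqrt (dot_self_nonneg x)

lemma vecNorm_eq_norm (x : Fin n → ℝ) :
    vecNorm x = ‖(WithLp.equiv 2 (Fin n → ℝ)).symm x‖ := by
  rw [EuclideanSpace.norm_eq]
  unfold vecNorm dotProduct
  congr 1
  refine Finset.sum_congr rfl fun i _ => ?_
  simp [Real.norm_eq_abs, sq_abs, sq]

lemma dot_le_norms (x y : Fin n → ℝ) : x ⬝ᵥ y ≤ vecNorm x * vecNorm y := by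
  have h := real_inner_le_norm ((WithLp.equiv 2 (Fin n → ℝ)).symm x)
      ((WithLp.equiv 2 (Fin n → ℝ)).symm y)
  rw [vecNorm_eq_norm, vecNorm_eq_norm]
  refine le_trans (le_of_eq ?_) h
  simp [PiLp.inner_apply, RCLike.inner_apply, dotProduct, mul_comm]

lemma mulVec_norm_le (M : Matrix (Fin n) (Fin n) ℝ) (x : Fin n → ℝ) :
    vecNorm (M *ᵥ x) ≤ opNorm M * vecNorm x := by
  have h := (Matrix.toEuclideanCLM (𝕜 := ℝ) M).le_opNorm
      ((WithLp.equiv 2 (Fin n → ℝ)).symm x)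
  rw [WithLp.equiv_symm_apply, Matrix.toEuclideanCLM_toLp] at h
  rw [vecNorm_eq_norm, vecNorm_eq_norm]
  exact h

lemma opNorm_nonneg (M : Matrix (Fin n) (Fin n) ℝ) : 0 ≤ opNorm M := norm_nonneg _

lemma dot_mulVec_eq (M : Matrix (Fin n) (Fin n) ℝ) (x y : Fin n → ℝ) :
    x ⬝ᵥ (M *ᵥ y) = (Mᵀ *ᵥ x) ⬝ᵥ y := by
  rw [dotProduct_mulVec, ← Matrix.mulVec_transpose]

lemma herm_transpose {k : ℕ} {X : Matrix (Fin k) (Fin k) ℝ} (h : X.IsHermitian) : Xᵀ = X := by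
  rwa [Matrix.IsHermitian, Matrix.conjTranspose_eq_transpose_of_trivial] at h

lemma rayleigh [Nonempty (Fin n)] {A : Matrix (Fin n) (Fin n) ℝ} (hA : A.IsHermitian)
    (x : Fin n → ℝ) :
    (⨅ i, hA.eigenvalues i) * (x ⬝ᵥ x) ≤ x ⬝ᵥ (A *ᵥ x) := by
  set lam := ⨅ i, hA.eigenvalues i with hlam
  have hbdd : BddBelow (Set.range hA.eigenvalues) := (Set.finite_range _).bddBelow
  have hpsd : (A - lam • 1).PosSemidef := by
    have hU1 : (hA.eigenvectorUnitary : Matrix (Fin n) (Fin n) ℝ) *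
        star (hA.eigenvectorUnitary : Matrix (Fin n) (Fin n) ℝ) = 1 :=
      Matrix.mem_unitaryGroup_iff.mp hA.eigenvectorUnitary.2
    have hdec : A - lam • 1 =
        (hA.eigenvectorUnitary : Matrix (Fin n) (Fin n) ℝ) *
          (diagonal (fun i => hA.eigenvalues i - lam)) *
          star (hA.eigenvectorUnitary : Matrix (Fin n) (Fin n) ℝ) := by
      have hd : diagonal (fun i => hA.eigenvalues i - lam)
          = diagonal (RCLike.ofReal ∘ hA.eigenvalues) - lam • 1 := by
        ext i j
        by_cases h : i = j <;>
          simp [Matrix.diagonal_apply, h, Matrix.one_apply, Matrix.sub_apply, Matrix.smul_apply]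
      rw [hd, Matrix.mul_sub, Matrix.sub_mul, ← Unitary.conjStarAlgAut_apply (S := ℝ),
        ← hA.spectral_theorem]
      congr 1
      rw [Matrix.mul_smul, Matrix.smul_mul, Matrix.mul_one, hU1]
    rw [hdec]
    refine Matrix.PosSemidef.mul_mul_conjTranspose_same ?_ _
    refine Matrix.posSemidef_diagonal_iff.mpr fun i => ?_
    have : lam ≤ hA.eigenvalues i := ciInf_le hbdd i
    linarith
  have h0 := hpsd.dotProduct_mulVec_nonneg x
  simp only [star_trivial, Matrix.sub_mulVec, Matrix.smul_mulVec,
    Matrix.one_mulVec, dotProduct_sub, dotProduct_smul, smul_eq_mul] at h0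
  linarith

lemma quad_ineq {C : Matrix (Fin n) (Fin n) ℝ} (hC : C.PosDef) (u v : Fin n → ℝ) :
    2 * (u ⬝ᵥ v) ≤ u ⬝ᵥ (C⁻¹ *ᵥ u) + v ⬝ᵥ (C *ᵥ v) := by
  have hCt : Cᵀ = C := herm_transpose hC.1
  have hCC : C * C⁻¹ = 1 := Matrix.mul_nonsing_inv _ hC.det_pos.ne'.isUnit
  have h0 := hC.posSemidef.dotProduct_mulVec_nonneg (C⁻¹ *ᵥ u - v)
  simp only [star_trivial] at h0
  rw [Matrix.mulVec_sub, sub_dotProduct, dotProduct_sub, dotProduct_sub,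
    Matrix.mulVec_mulVec, hCC, Matrix.one_mulVec] at h0
  have h1 : (C⁻¹ *ᵥ u) ⬝ᵥ u = u ⬝ᵥ (C⁻¹ *ᵥ u) := dotProduct_comm _ _
  have h2 : (C⁻¹ *ᵥ u) ⬝ᵥ (C *ᵥ v) = u ⬝ᵥ v := by
    rw [dot_mulVec_eq, hCt, Matrix.mulVec_mulVec, hCC, Matrix.one_mulVec]
  have h3 : v ⬝ᵥ u = u ⬝ᵥ v := dotProduct_comm _ _
  linarith

end RobustAux

open RobustAux

set_option maxHeartbeats 2000000 in
/-- event-error Lyapunov decrement bound, inequality (20) of the paper.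
With `ξ₁ = λ_min(Q₁)/2` and
`ξ₂ = 2‖A_cᵀ (P⁻¹ - εI)⁻¹ B K‖²/λ_min(Q₁) + ‖Kᵀ Bᵀ (P⁻¹ - εI)⁻¹ B K‖`, for all `x, e`,
letting `x⁺ = (A + ΔA) x + B K (x + e)`, one has
`V(x⁺) - V(x) ≤ -ξ₁ ‖x‖² + ξ₂ ‖e‖²`. -/
theorem event_error_lyapunov_decrement
    (n m : ℕ) (hn : 0 < n) (hm : 0 < m)
    (A : Matrix (Fin n) (Fin n) ℝ) (B : Matrix (Fin n) (Fin m) ℝ)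
    (hBtB : IsUnit (Bᵀ * B))
    (Bp : Matrix (Fin m) (Fin n) ℝ) (hBp : Bp = (Bᵀ * B)⁻¹ * Bᵀ)
    (P : Matrix (Fin n) (Fin n) ℝ) (hP : P.PosDef)
    (R₁ : Matrix (Fin m) (Fin m) ℝ) (hR₁ : R₁.PosDef)
    (R₂ : Matrix (Fin n) (Fin n) ℝ) (hR₂ : R₂.PosDef)
    (α : ℝ)
    (Q F : Matrix (Fin n) (Fin n) ℝ) (hQ : Q.PosSemidef) (hF : F.IsHermitian)
    (ε : ℝ) (hε : 0 < ε)
    (hεP : (ε⁻¹ • (1 : Matrix (Fin n) (Fin n) ℝ) - P).PosDef)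
    (N : Matrix (Fin n) (Fin n) ℝ)
    (hN : N = P⁻¹ + B * R₁⁻¹ * Bᵀ
        + α ^ 2 • ((1 - B * Bp) * R₂⁻¹ * (1 - B * Bp)ᵀ))
    (K : Matrix (Fin m) (Fin n) ℝ) (hK : K = -(R₁⁻¹ * Bᵀ * N⁻¹ * A))
    (L : Matrix (Fin n) (Fin n) ℝ) (hL : L = -(α • (R₂⁻¹ * (1 - B * Bp)ᵀ * N⁻¹ * A)))
    (M : Matrix (Fin n) (Fin n) ℝ) (hM : M = N⁻¹ * A)
    (Ac : Matrix (Fin n) (Fin n) ℝ) (hAc : Ac = A + B * K)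
    (Q₁ : Matrix (Fin n) (Fin n) ℝ)
    (hQ₁ : Q₁ = Q + Kᵀ * R₁ * K + Lᵀ * R₂ * L + Mᵀ * P⁻¹ * M
        - Acᵀ * (P⁻¹ - ε • (1 : Matrix (Fin n) (Fin n) ℝ))⁻¹ * Ac)
    (hRic : Aᵀ * N⁻¹ * A - P + Q + F = 0)
    (hQ₁pd : Q₁.PosDef)
    (ΔA : Matrix (Fin n) (Fin n) ℝ)
    (hΔA : ((ε / 2) • F - ΔAᵀ * ΔA).PosSemidef)
    (V : (Fin n → ℝ) → ℝ) (hV : ∀ z, V z = z ⬝ᵥ (P *ᵥ z))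
    (ξ₁ ξ₂ : ℝ)
    (hξ₁ : ξ₁ = (⨅ i, hQ₁pd.1.eigenvalues i) / 2)
    (hξ₂ : ξ₂ = 2 * opNorm (Acᵀ * (P⁻¹ - ε • (1 : Matrix (Fin n) (Fin n) ℝ))⁻¹ * (B * K)) ^ 2
          / (⨅ i, hQ₁pd.1.eigenvalues i)
        + opNorm (Kᵀ * Bᵀ * (P⁻¹ - ε • (1 : Matrix (Fin n) (Fin n) ℝ))⁻¹ * (B * K))) :
    ∀ x e : Fin n → ℝ,
      V ((A + ΔA) *ᵥ x + (B * K) *ᵥ (x + e)) - V x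
        ≤ -ξ₁ * vecNorm x ^ 2 + ξ₂ * vecNorm e ^ 2 := by
  intro x e
  haveI : Nonempty (Fin n) := ⟨⟨0, hn⟩⟩
  -- abbreviations
  set C : Matrix (Fin n) (Fin n) ℝ := ε⁻¹ • (1 : Matrix (Fin n) (Fin n) ℝ) - P with hCdef
  set W : Matrix (Fin n) (Fin n) ℝ := (P⁻¹ - ε • (1 : Matrix (Fin n) (Fin n) ℝ))⁻¹ with hWdef
  -- basic symmetry / invertibility facts
  have hPt : Pᵀ = P := herm_transpose hP.1
  have hPd : IsUnit P.det := hP.det_pos.ne'.isUnit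
  have hR₁t : R₁ᵀ = R₁ := herm_transpose hR₁.1
  have hR₂t : R₂ᵀ = R₂ := herm_transpose hR₂.1
  have hR₁d : IsUnit R₁.det := hR₁.det_pos.ne'.isUnit
  have hR₂d : IsUnit R₂.det := hR₂.det_pos.ne'.isUnit
  have hPinvt : (P⁻¹)ᵀ = P⁻¹ := by rw [Matrix.transpose_nonsing_inv, hPt]
  have hR₁invt : (R₁⁻¹)ᵀ = R₁⁻¹ := by rw [Matrix.transpose_nonsing_inv, hR₁t]
  have hR₂invt : (R₂⁻¹)ᵀ = R₂⁻¹ := by rw [Matrix.transpose_nonsing_inv, hR₂t]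
  -- N is positive definite
  have h2 : (B * R₁⁻¹ * Bᵀ).PosSemidef := by
    have := hR₁.inv.posSemidef.mul_mul_conjTranspose_same B
    simpa using this
  have h3 : (α ^ 2 • ((1 - B * Bp) * R₂⁻¹ * (1 - B * Bp)ᵀ)).PosSemidef := by
    have h := hR₂.inv.posSemidef.mul_mul_conjTranspose_same (1 - B * Bp)
    simp only [Matrix.conjTranspose_eq_transpose_of_trivial] at h
    refine Matrix.PosSemidef.of_dotProduct_mulVec_nonneg ?_ fun y => ?_
    · show (α ^ 2 • ((1 - B * Bp) * R₂⁻¹ * (1 - B * Bp)ᵀ))ᴴ = _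
      rw [Matrix.conjTranspose_smul, star_trivial, h.1]
    · rw [Matrix.smul_mulVec, dotProduct_smul, smul_eq_mul]
      exact mul_nonneg (sq_nonneg α) (by simpa using h.dotProduct_mulVec_nonneg y)
  have hNpd : N.PosDef := by
    rw [hN]
    exact (hP.inv.add_posSemidef h2).add_posSemidef h3
  have hNd : IsUnit N.det := hNpd.det_pos.ne'.isUnit
  have hNt : Nᵀ = N := herm_transpose hNpd.1
  have hNinvt : (N⁻¹)ᵀ = N⁻¹ := by rw [Matrix.transpose_nonsing_inv, hNt]
  -- the key algebraic identity K'R₁K + L'R₂L + M'P⁻¹M = A'N⁻¹A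
  have e1 : Kᵀ * R₁ * K = Aᵀ * (N⁻¹ * (B * (R₁⁻¹ * (Bᵀ * (N⁻¹ * A))))) := by
    rw [hK]
    simp only [Matrix.transpose_neg, Matrix.transpose_mul, Matrix.transpose_transpose,
      Matrix.neg_mul, Matrix.mul_neg, neg_neg, hNinvt, hR₁invt, Matrix.mul_assoc]
    rw [Matrix.mul_nonsing_inv_cancel_left _ _ hR₁d]
  have e2 : Lᵀ * R₂ * L
      = α ^ 2 • (Aᵀ * (N⁻¹ * ((1 - B * Bp) * (R₂⁻¹ * ((1 - B * Bp)ᵀ * (N⁻¹ * A)))))) := by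
    rw [hL]
    simp only [Matrix.transpose_neg, Matrix.transpose_smul, Matrix.transpose_mul,
      Matrix.transpose_transpose, Matrix.neg_mul, Matrix.mul_neg, neg_neg,
      Matrix.smul_mul, Matrix.mul_smul, hNinvt, hR₂invt, Matrix.mul_assoc, smul_smul]
    simp only [smul_neg, neg_neg, smul_smul, ← pow_two]
    rw [Matrix.mul_nonsing_inv_cancel_left _ _ hR₂d]
  have e3 : Mᵀ * P⁻¹ * M = Aᵀ * (N⁻¹ * (P⁻¹ * (N⁻¹ * A))) := by
    rw [hM]
    simp only [Matrix.transpose_mul, hNinvt, Matrix.mul_assoc]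
  have hSum : Kᵀ * R₁ * K + Lᵀ * R₂ * L + Mᵀ * P⁻¹ * M = Aᵀ * N⁻¹ * A := by
    rw [e1, e2, e3]
    have hstep : Aᵀ * N⁻¹ * A = Aᵀ * (N⁻¹ * (N * (N⁻¹ * A))) := by
      rw [Matrix.mul_nonsing_inv_cancel_left _ _ hNd, Matrix.mul_assoc]
    rw [hstep, hN]
    simp only [Matrix.add_mul, Matrix.mul_add, Matrix.smul_mul, Matrix.mul_smul,
      Matrix.mul_assoc]
    abel
  have hAN : Aᵀ * N⁻¹ * A = P - Q - F := by
    have hrw : Aᵀ * N⁻¹ * A - (P - Q - F) = Aᵀ * N⁻¹ * A - P + Q + F := by abel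
    rw [← sub_eq_zero, hrw, hRic]
  -- the Riccati consequence for Q₁
  have hQ₁W : Acᵀ * W * Ac = P - F - Q₁ := by
    have h1 : Q₁ = Q + (Kᵀ * R₁ * K + Lᵀ * R₂ * L + Mᵀ * P⁻¹ * M) - Acᵀ * W * Ac := by
      rw [hQ₁]; abel
    rw [hSum, hAN] at h1
    rw [h1]; abel
  -- W = P + P C⁻¹ P
  have hCd : IsUnit C.det := hεP.det_pos.ne'.isUnit
  have hCCinv : C * C⁻¹ = 1 := Matrix.mul_nonsing_inv _ hCd
  have hPinvP : P⁻¹ * P = 1 := Matrix.nonsing_inv_mul _ hPd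
  have hεC : (1 : Matrix (Fin n) (Fin n) ℝ) - ε • P = ε • C := by
    rw [hCdef, smul_sub, smul_smul, mul_inv_cancel₀ hε.ne', one_smul]
  have hkey : C⁻¹ * P - ε • (P * (C⁻¹ * P)) = ε • P := by
    have h' : C⁻¹ * P - ε • (P * (C⁻¹ * P))
        = ((1 : Matrix (Fin n) (Fin n) ℝ) - ε • P) * (C⁻¹ * P) := by
      simp [Matrix.sub_mul, Matrix.smul_mul, Matrix.mul_assoc]
    rw [h', hεC, Matrix.smul_mul, ← Matrix.mul_assoc, hCCinv, Matrix.one_mul]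
  have hWright : (P⁻¹ - ε • (1 : Matrix (Fin n) (Fin n) ℝ)) * (P + P * C⁻¹ * P) = 1 := by
    have hexp : (P⁻¹ - ε • (1 : Matrix (Fin n) (Fin n) ℝ)) * (P + P * C⁻¹ * P)
        = 1 + C⁻¹ * P - (ε • P + ε • (P * (C⁻¹ * P))) := by
      simp only [Matrix.sub_mul, Matrix.mul_add, Matrix.smul_mul, Matrix.one_mul,
        Matrix.mul_assoc, hPinvP]
      rw [Matrix.nonsing_inv_mul_cancel_left _ _ hPd]
      abel
    rw [hexp, ← hkey]
    abel
  have hW : W = P + P * C⁻¹ * P := Matrix.inv_eq_right_inv hWright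
  have hWt : Wᵀ = W := by
    rw [hWdef, Matrix.transpose_nonsing_inv]
    congr 1
    rw [Matrix.transpose_sub, hPinvt, Matrix.transpose_smul, Matrix.transpose_one]
  -- vectors
  set u : Fin n → ℝ := Ac *ᵥ x with hu
  set w : Fin n → ℝ := (B * K) *ᵥ e with hwv
  set a : Fin n → ℝ := u + w with ha
  set b : Fin n → ℝ := ΔA *ᵥ x with hb
  have hxp : (A + ΔA) *ᵥ x + (B * K) *ᵥ (x + e) = a + b := by
    rw [ha, hu, hwv, hb, hAc]
    simp only [Matrix.add_mulVec, Matrix.mulVec_add]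
    abel
  -- step 1 : V(x⁺) ≤ aᵀ W a + ε⁻¹ bᵀ b
  have key1 : (a + b) ⬝ᵥ (P *ᵥ (a + b)) ≤ a ⬝ᵥ (W *ᵥ a) + ε⁻¹ * (b ⬝ᵥ b) := by
    have hq := quad_ineq hεP (P *ᵥ a) b
    have t1 : a ⬝ᵥ (P *ᵥ b) = (P *ᵥ a) ⬝ᵥ b := by rw [dot_mulVec_eq, hPt]
    have t2 : b ⬝ᵥ (P *ᵥ a) = (P *ᵥ a) ⬝ᵥ b := dotProduct_comm _ _
    have t3 : a ⬝ᵥ (W *ᵥ a) = a ⬝ᵥ (P *ᵥ a) + (P *ᵥ a) ⬝ᵥ (C⁻¹ *ᵥ (P *ᵥ a)) := by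
      rw [hW, Matrix.add_mulVec, dotProduct_add]
      congr 1
      rw [← Matrix.mulVec_mulVec, ← Matrix.mulVec_mulVec, dot_mulVec_eq, hPt]
    have t4 : b ⬝ᵥ (C *ᵥ b) + b ⬝ᵥ (P *ᵥ b) = ε⁻¹ * (b ⬝ᵥ b) := by
      rw [← dotProduct_add, ← Matrix.add_mulVec]
      have hCP : C + P = ε⁻¹ • (1 : Matrix (Fin n) (Fin n) ℝ) := by
        rw [hCdef]; abel
      rw [hCP, Matrix.smul_mulVec, Matrix.one_mulVec, dotProduct_smul, smul_eq_mul]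
    rw [Matrix.mulVec_add, add_dotProduct, dotProduct_add, dotProduct_add]
    linarith
  -- step 2 : ε⁻¹ bᵀ b ≤ ½ xᵀ F x, and xᵀ F x ≥ 0
  have hbb : b ⬝ᵥ b = x ⬝ᵥ ((ΔAᵀ * ΔA) *ᵥ x) := by
    have h := dot_mulVec_eq (ΔAᵀ) x (ΔA *ᵥ x)
    rw [Matrix.transpose_transpose] at h
    rw [← Matrix.mulVec_mulVec, h, hb]
  have hΔ := hΔA.dotProduct_mulVec_nonneg x
  simp only [star_trivial, Matrix.sub_mulVec, Matrix.smul_mulVec, dotProduct_sub,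
    dotProduct_smul, smul_eq_mul] at hΔ
  have hbbnn : 0 ≤ b ⬝ᵥ b := dot_self_nonneg b
  have hFnn : 0 ≤ x ⬝ᵥ (F *ᵥ x) := by nlinarith [hΔ, hbb, hbbnn, hε]
  have key2 : ε⁻¹ * (b ⬝ᵥ b) ≤ (1 / 2) * (x ⬝ᵥ (F *ᵥ x)) := by
    have h2' := mul_le_mul_of_nonneg_left (hbb ▸ hΔ) (inv_nonneg.mpr hε.le)
    have h3' : ε⁻¹ * (ε / 2 * (x ⬝ᵥ (F *ᵥ x))) = 1 / 2 * (x ⬝ᵥ (F *ᵥ x)) := by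
      field_simp
    linarith
  -- step 3 : expand aᵀ W a
  have t1 : x ⬝ᵥ ((Acᵀ * W * Ac) *ᵥ x) = u ⬝ᵥ (W *ᵥ u) := by
    rw [← Matrix.mulVec_mulVec, ← Matrix.mulVec_mulVec, dot_mulVec_eq,
      Matrix.transpose_transpose, hu]
  have t2 : x ⬝ᵥ ((Acᵀ * W * (B * K)) *ᵥ e) = u ⬝ᵥ (W *ᵥ w) := by
    rw [← Matrix.mulVec_mulVec, ← Matrix.mulVec_mulVec, dot_mulVec_eq,
      Matrix.transpose_transpose, hu, hwv]
  have t3 : e ⬝ᵥ ((Kᵀ * Bᵀ * W * (B * K)) *ᵥ e) = w ⬝ᵥ (W *ᵥ w) := by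
    have hKB : Kᵀ * Bᵀ * W * (B * K) = (B * K)ᵀ * W * (B * K) := by
      rw [Matrix.transpose_mul]
    rw [hKB, ← Matrix.mulVec_mulVec, ← Matrix.mulVec_mulVec, dot_mulVec_eq,
      Matrix.transpose_transpose, hwv]
  have t4 : w ⬝ᵥ (W *ᵥ u) = u ⬝ᵥ (W *ᵥ w) := by
    rw [dot_mulVec_eq, hWt, dotProduct_comm]
  have key3 : a ⬝ᵥ (W *ᵥ a)
      = x ⬝ᵥ ((Acᵀ * W * Ac) *ᵥ x) + 2 * (x ⬝ᵥ ((Acᵀ * W * (B * K)) *ᵥ e))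
        + e ⬝ᵥ ((Kᵀ * Bᵀ * W * (B * K)) *ᵥ e) := by
    rw [t1, t2, t3, ha, Matrix.mulVec_add, add_dotProduct, dotProduct_add, dotProduct_add]
    linarith
  -- step 4 : Riccati substitution
  have key4 : x ⬝ᵥ ((Acᵀ * W * Ac) *ᵥ x)
      = x ⬝ᵥ (P *ᵥ x) - x ⬝ᵥ (F *ᵥ x) - x ⬝ᵥ (Q₁ *ᵥ x) := by
    rw [hQ₁W]
    simp only [Matrix.sub_mulVec, dotProduct_sub]
  -- eigenvalue bound
  set lam : ℝ := ⨅ i, hQ₁pd.1.eigenvalues i with hlamdef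
  have hray := rayleigh hQ₁pd.1 x
  have hlampos : 0 < lam := by
    obtain ⟨i, hi⟩ := exists_eq_ciInf_of_finite (f := hQ₁pd.1.eigenvalues)
    rw [hlamdef, ← hi]
    exact hQ₁pd.eigenvalues_pos i
  -- norm bounds
  set g : ℝ := opNorm (Acᵀ * W * (B * K)) with hg
  set hq : ℝ := opNorm (Kᵀ * Bᵀ * W * (B * K)) with hh
  set nx : ℝ := vecNorm x with hnx
  set ne' : ℝ := vecNorm e with hne
  have hGe : x ⬝ᵥ ((Acᵀ * W * (B * K)) *ᵥ e) ≤ nx * (g * ne') :=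
    le_trans (dot_le_norms _ _)
      (mul_le_mul_of_nonneg_left (mulVec_norm_le _ _) (vecNorm_nonneg x))
  have hHe : e ⬝ᵥ ((Kᵀ * Bᵀ * W * (B * K)) *ᵥ e) ≤ ne' * (hq * ne') :=
    le_trans (dot_le_norms _ _)
      (mul_le_mul_of_nonneg_left (mulVec_norm_le _ _) (vecNorm_nonneg e))
  have hxx : x ⬝ᵥ x = nx ^ 2 := (vecNorm_sq x).symm
  have hgnn : 0 ≤ g := opNorm_nonneg _
  have hhnn : 0 ≤ hq := opNorm_nonneg _
  have hnxnn : 0 ≤ nx := vecNorm_nonneg x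
  have hnenn : 0 ≤ ne' := vecNorm_nonneg e
  -- Young-type bound on the cross term
  have key5 : 2 * (nx * (g * ne')) - lam / 2 * nx ^ 2 ≤ 2 * g ^ 2 * ne' ^ 2 / lam := by
    rw [le_div_iff₀ hlampos]
    nlinarith [sq_nonneg (lam * nx - 2 * (g * ne'))]
  -- assemble
  have hVx : V x = x ⬝ᵥ (P *ᵥ x) := hV x
  have hVxp : V ((A + ΔA) *ᵥ x + (B * K) *ᵥ (x + e)) = (a + b) ⬝ᵥ (P *ᵥ (a + b)) := by
    rw [hV, hxp]
  have hxi2 : ξ₂ * ne' ^ 2 = 2 * g ^ 2 * ne' ^ 2 / lam + hq * ne' ^ 2 := by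
    rw [hξ₂]; ring
  have hray' : lam * nx ^ 2 ≤ x ⬝ᵥ (Q₁ *ᵥ x) := by rw [← hxx]; exact hray
  have hne2 : ne' * (hq * ne') = hq * ne' ^ 2 := by ring
  rw [hVxp, hVx, hξ₁, hxi2]
  linarith
end

section
/- Let P be a real symmetric positive definite n×n matrix, and let ξ₁ ≥ 0, ξ₂ ≥ 0, μ ≥ 0 be real numbers. Let x, x_a ∈ ℝⁿ, let e ∈ ℝⁿ satisfy ‖e‖ ≤ (1 + √μ)‖x_a‖ + ‖x‖, and let V_next be a real number satisfying V_next − xᵀ P x ≤ −ξ₁‖x‖² + ξ₂‖e‖². Then V_next ≤ (1 + γ) · max{ xᵀ P x , x_aᵀ P x_a } where γ = ξ₂ (2 + √μ)² / λ_min(P). -/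
open Matrix

/-- Auxiliary: `λ_min(P) ‖z‖² ≤ zᵀ P z` for a real symmetric matrix. -/
lemma min_eig_mul_le {n : ℕ} (P : Matrix (Fin n) (Fin n) ℝ) (hP : P.IsHermitian)
    (z : Fin n → ℝ) :
    (⨅ i, hP.eigenvalues i) * (z ⬝ᵥ z) ≤ z ⬝ᵥ (P *ᵥ z) := by
  rcases Nat.eq_zero_or_pos n with h0 | hn
  · subst h0
    simp [dotProduct]
  set lam := ⨅ i, hP.eigenvalues i with hlam
  have hle : ∀ i, lam ≤ hP.eigenvalues i := fun i =>
    ciInf_le (Set.Finite.bddBelow (Set.finite_range _)) i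
  set U : Matrix (Fin n) (Fin n) ℝ := (hP.eigenvectorUnitary : Matrix (Fin n) (Fin n) ℝ)
  have hU : U * Uᴴ = 1 := by
    have h := (Matrix.mem_unitaryGroup_iff).1 hP.eigenvectorUnitary.2
    rw [Matrix.star_eq_conjTranspose] at h
    exact h
  have hD : (Matrix.diagonal (fun i => hP.eigenvalues i - lam)).PosSemidef :=
    Matrix.PosSemidef.diagonal (fun i => sub_nonneg.2 (hle i))
  have key : (U * Matrix.diagonal (fun i => hP.eigenvalues i - lam) * Uᴴ).PosSemidef :=
    hD.mul_mul_conjTranspose_same U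
  have hspec : P = U * Matrix.diagonal hP.eigenvalues * Uᴴ := by
    have := hP.spectral_theorem
    simpa [Function.comp, Matrix.star_eq_conjTranspose] using this
  have heq : U * Matrix.diagonal (fun i => hP.eigenvalues i - lam) * Uᴴ = P - lam • 1 := by
    have hdiag : Matrix.diagonal (fun i => hP.eigenvalues i - lam)
        = Matrix.diagonal hP.eigenvalues - lam • 1 := by
      rw [← Matrix.diagonal_one, ← Matrix.diagonal_smul, ← Matrix.diagonal_sub]
      ext i j
      by_cases h : i = j <;> simp [h, Matrix.diagonal, smul_eq_mul]
    rw [hdiag, Matrix.mul_sub, Matrix.sub_mul, Matrix.mul_smul, Matrix.smul_mul, mul_one, hU,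
      ← hspec]
  rw [heq] at key
  have h0 := key.re_dotProduct_nonneg z
  simp only [RCLike.re_to_real, star_trivial] at h0
  have : z ⬝ᵥ ((P - lam • 1) *ᵥ z) = z ⬝ᵥ (P *ᵥ z) - lam * (z ⬝ᵥ z) := by
    rw [Matrix.sub_mulVec, dotProduct_sub, Matrix.smul_mulVec, Matrix.one_mulVec,
      dotProduct_smul, smul_eq_mul]
  rw [this] at h0
  linarith

/-- Lyapunov growth bound during a DoS attack, inequality (27) of the paper.
If `‖e‖ ≤ (1 + √μ)‖x_a‖ + ‖x‖` and `V_next - xᵀ P x ≤ -ξ₁‖x‖² + ξ₂‖e‖²`, then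
`V_next ≤ (1 + γ) max(xᵀ P x, x_aᵀ P x_a)` where `γ = ξ₂ (2 + √μ)² / λ_min(P)`. -/
theorem dos_attack_lyapunov_growth
    (n : ℕ) (hn : 0 < n)
    (P : Matrix (Fin n) (Fin n) ℝ) (hP : P.PosDef)
    (ξ₁ ξ₂ μ : ℝ) (hξ₁ : 0 ≤ ξ₁) (hξ₂ : 0 ≤ ξ₂) (hμ : 0 ≤ μ)
    (x xa e : Fin n → ℝ)
    (he : vecNorm e ≤ (1 + Real.sqrt μ) * vecNorm xa + vecNorm x)
    (Vnext : ℝ)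
    (hV : Vnext - x ⬝ᵥ (P *ᵥ x) ≤ -ξ₁ * vecNorm x ^ 2 + ξ₂ * vecNorm e ^ 2)
    (γ : ℝ)
    (hγ : γ = ξ₂ * (2 + Real.sqrt μ) ^ 2 / (⨅ i, hP.1.eigenvalues i)) :
    Vnext ≤ (1 + γ) * max (x ⬝ᵥ (P *ᵥ x)) (xa ⬝ᵥ (P *ᵥ xa)) := by
  have hne : Nonempty (Fin n) := ⟨⟨0, hn⟩⟩
  set lam := ⨅ i, hP.1.eigenvalues i with hlam
  obtain ⟨i₀, hi₀⟩ := Finite.exists_min hP.1.eigenvalues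
  have hlam_eq : lam = hP.1.eigenvalues i₀ :=
    le_antisymm (ciInf_le (Set.Finite.bddBelow (Set.finite_range _)) i₀) (le_ciInf hi₀)
  have hlam_pos : 0 < lam := hlam_eq ▸ hP.eigenvalues_pos i₀
  have hsq : ∀ z : Fin n → ℝ, vecNorm z ^ 2 = z ⬝ᵥ z := fun z => by
    rw [vecNorm, sq]
    exact Real.mul_self_sqrt (Finset.sum_nonneg fun i _ => mul_self_nonneg _)
  have hx2 : lam * vecNorm x ^ 2 ≤ x ⬝ᵥ (P *ᵥ x) := by
    rw [hsq x]; exact min_eig_mul_le P hP.1 x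
  have hxa2 : lam * vecNorm xa ^ 2 ≤ xa ⬝ᵥ (P *ᵥ xa) := by
    rw [hsq xa]; exact min_eig_mul_le P hP.1 xa
  set M := max (x ⬝ᵥ (P *ᵥ x)) (xa ⬝ᵥ (P *ᵥ xa)) with hM
  have hMx : x ⬝ᵥ (P *ᵥ x) ≤ M := le_max_left _ _
  have hMxa : xa ⬝ᵥ (P *ᵥ xa) ≤ M := le_max_right _ _
  set a := vecNorm x
  set b := vecNorm xa
  set c := vecNorm e
  set s := Real.sqrt μ
  have ha : 0 ≤ a := Real.sqrt_nonneg _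
  have hb : 0 ≤ b := Real.sqrt_nonneg _
  have hc : 0 ≤ c := Real.sqrt_nonneg _
  have hs : 0 ≤ s := Real.sqrt_nonneg _
  set m := max a b with hm
  have hm0 : 0 ≤ m := le_trans ha (le_max_left _ _)
  have hcm : c ≤ (2 + s) * m := by
    have h1 : a ≤ m := le_max_left _ _
    have h2 : b ≤ m := le_max_right _ _
    nlinarith
  have hcsq : c ^ 2 ≤ (2 + s) ^ 2 * m ^ 2 := by nlinarith
  have hmm : lam * m ^ 2 ≤ M := by
    rcases max_cases a b with ⟨h, _⟩ | ⟨h, _⟩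
    · rw [hm, h]; exact le_trans hx2 hMx
    · rw [hm, h]; exact le_trans hxa2 hMxa
  have hγM : ξ₂ * c ^ 2 ≤ γ * M := by
    rw [hγ, div_mul_eq_mul_div, le_div_iff₀ hlam_pos]
    nlinarith [mul_le_mul_of_nonneg_left hcsq hξ₂,
      mul_le_mul_of_nonneg_left hmm (mul_nonneg hξ₂ (sq_nonneg (2 + s)))]
  have hMex : (1 + γ) * M = M + γ * M := by ring
  rw [hMex]
  nlinarith [mul_nonneg hξ₁ (sq_nonneg a)]
end

section
/- Let P be a real symmetric positive definite n×n matrix, x : ℕ → ℝⁿ, V(j) = x(j)ᵀ P x(j), let c₁ > 0, c₂ > 0, and D ⊆ ℕ, and fix k ∈ ℕ. Suppose for every j < k: V(j+1) ≤ c₁ V(j) if j ∉ D and V(j+1) ≤ c₂ V(j) if j ∈ D. Let T = |D ∩ [0,k)|, let N be any nonnegative integer (in particular, the number N_off(k) of off-to-on transitions of D in [0,k)), and set Ξ = λ_max(P)/λ_min(P). Then ‖x(k)‖ ≤ Ξ^{(1+N)/2} · c₁^{(k−T)/2} · c₂^{T/2} · ‖x(0)‖. -/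
open Matrix

lemma quad_bounds {n : ℕ} (hn : 0 < n) {P : Matrix (Fin n) (Fin n) ℝ}
    (hP : P.IsHermitian) (z : Fin n → ℝ) :
    (⨅ i, hP.eigenvalues i) * (z ⬝ᵥ z) ≤ z ⬝ᵥ (P *ᵥ z) ∧
      z ⬝ᵥ (P *ᵥ z) ≤ (⨆ i, hP.eigenvalues i) * (z ⬝ᵥ z) := by
  haveI : Nonempty (Fin n) := ⟨⟨0, hn⟩⟩
  set U : Matrix (Fin n) (Fin n) ℝ := (hP.eigenvectorUnitary : Matrix (Fin n) (Fin n) ℝ) with hU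
  set w : Fin n → ℝ := star U *ᵥ z with hw
  have hquad : z ⬝ᵥ (P *ᵥ z) = ∑ i, hP.eigenvalues i * (w i) ^ 2 := by
    conv_lhs => rw [hP.spectral_theorem, Unitary.conjStarAlgAut_apply]
    rw [← mulVec_mulVec, ← mulVec_mulVec, dotProduct_mulVec, ← mulVec_transpose]
    have : Uᵀ = star U := by
      rw [Matrix.star_eq_conjTranspose, conjTranspose]; ext i j; simp
    rw [this, ← hw]
    simp only [dotProduct, mulVec_diagonal, Function.comp_apply]
    exact Finset.sum_congr rfl fun i _ => by
      simp only [RCLike.ofReal_real_eq_id, id_eq]; ring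
  have hnorm : z ⬝ᵥ z = ∑ i, (w i) ^ 2 := by
    have h1 : U * star U = 1 := (Matrix.mem_unitaryGroup_iff).mp hP.eigenvectorUnitary.2
    have : z ⬝ᵥ z = z ⬝ᵥ ((U * star U) *ᵥ z) := by rw [h1, one_mulVec]
    rw [this, ← mulVec_mulVec, dotProduct_mulVec, ← mulVec_transpose]
    have h2 : Uᵀ = star U := by
      rw [Matrix.star_eq_conjTranspose, conjTranspose]; ext i j; simp
    rw [h2, ← hw]
    simp [dotProduct, sq]
  have hbdd : BddAbove (Set.range hP.eigenvalues) := (Set.finite_range _).bddAbove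
  have hbddb : BddBelow (Set.range hP.eigenvalues) := (Set.finite_range _).bddBelow
  constructor
  · rw [hquad, hnorm, Finset.mul_sum]
    exact Finset.sum_le_sum fun i _ =>
      mul_le_mul_of_nonneg_right (ciInf_le hbddb i) (sq_nonneg _)
  · rw [hquad, hnorm, Finset.mul_sum]
    exact Finset.sum_le_sum fun i _ =>
      mul_le_mul_of_nonneg_right (le_ciSup hbdd i) (sq_nonneg _)


/-- state bound under DoS, inequality (29) of the paper.
If `V(j) = x(j)ᵀ P x(j)` contracts by `c₁` on un-attacked steps and grows by at most `c₂`
on attacked steps, then with `T` the attack duration before `k`, any `N ≥ 0`, and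
`Ξ = λ_max(P)/λ_min(P)`,
`‖x(k)‖ ≤ Ξ^((1+N)/2) c₁^((k-T)/2) c₂^(T/2) ‖x(0)‖`. -/
theorem state_bound_under_dos
    (n : ℕ) (hn : 0 < n)
    (P : Matrix (Fin n) (Fin n) ℝ) (hP : P.PosDef)
    (x : ℕ → Fin n → ℝ)
    (V : ℕ → ℝ) (hV : ∀ j, V j = x j ⬝ᵥ (P *ᵥ x j))
    (c₁ c₂ : ℝ) (hc₁ : 0 < c₁) (hc₂ : 0 < c₂)
    (D : Set ℕ) (k : ℕ)
    (hstep : ∀ j < k, (j ∉ D → V (j + 1) ≤ c₁ * V j) ∧ (j ∈ D → V (j + 1) ≤ c₂ * V j))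
    (T : ℕ) (hT : T = (D ∩ Set.Iio k).ncard)
    (N : ℕ)
    (Ξ : ℝ) (hΞ : Ξ = (⨆ i, hP.1.eigenvalues i) / (⨅ i, hP.1.eigenvalues i)) :
    vecNorm (x k) ≤ Ξ ^ ((1 + (N : ℝ)) / 2) * c₁ ^ (((k : ℝ) - (T : ℝ)) / 2)
      * c₂ ^ ((T : ℝ) / 2) * vecNorm (x 0) := by
  haveI : Nonempty (Fin n) := ⟨⟨0, hn⟩⟩
  set lm : ℝ := ⨅ i, hP.1.eigenvalues i with hlm
  set lM : ℝ := ⨆ i, hP.1.eigenvalues i with hlM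
  -- positivity of eigenvalue extremes
  have heigpos : ∀ i, 0 < hP.1.eigenvalues i := fun i => hP.eigenvalues_pos i
  obtain ⟨i₀, hi₀⟩ := exists_eq_ciInf_of_finite (f := hP.1.eigenvalues)
  have hlmpos : 0 < lm := by rw [hlm, ← hi₀]; exact heigpos i₀
  have hbdd : BddAbove (Set.range hP.1.eigenvalues) := (Set.finite_range _).bddAbove
  have hlmle : lm ≤ lM := le_trans (hi₀.symm.le) (le_ciSup hbdd i₀)
  have hlMpos : 0 < lM := lt_of_lt_of_le hlmpos hlmle
  have hΞ1 : 1 ≤ Ξ := by rw [hΞ]; exact (one_le_div hlmpos).mpr hlmle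
  -- nonnegativity of V
  have hVnn : ∀ j, 0 ≤ V j := by
    intro j
    rw [hV j]
    have := (quad_bounds hn hP.1 (x j)).1
    have hdnn : 0 ≤ x j ⬝ᵥ x j := by
      simp only [dotProduct]
      exact Finset.sum_nonneg fun i _ => mul_self_nonneg _
    nlinarith
  -- T bound
  have hTfin : ∀ j : ℕ, (D ∩ Set.Iio j).Finite :=
    fun j => (Set.finite_Iio j).inter_of_right _
  have hTle : ∀ j : ℕ, (D ∩ Set.Iio j).ncard ≤ j := by
    intro j
    have h1 : (D ∩ Set.Iio j).ncard ≤ (Set.Iio j).ncard :=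
      Set.ncard_le_ncard Set.inter_subset_right (Set.finite_Iio j)
    have h2 : (Set.Iio j : Set ℕ).ncard = j := by
      rw [show (Set.Iio j : Set ℕ) = ↑(Finset.Iio j) by simp, Set.ncard_coe_finset,
        Nat.card_Iio]
    omega
  -- key induction
  have key : ∀ j, j ≤ k →
      V j ≤ c₁ ^ (j - (D ∩ Set.Iio j).ncard) * c₂ ^ ((D ∩ Set.Iio j).ncard) * V 0 := by
    intro j
    induction j with
    | zero =>
      intro _
      have h0 : (D ∩ Set.Iio 0) = ∅ := by ext m; simp
      simp [h0]
    | succ j ih =>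
      intro hjk
      have hj : j < k := hjk
      have ihv := ih (le_of_lt hj)
      set t := (D ∩ Set.Iio j).ncard with ht
      have htj : t ≤ j := hTle j
      have hiio : Set.Iio (j+1) = insert j (Set.Iio j) := by
        ext m; simp only [Set.mem_Iio, Set.mem_insert_iff]; omega
      by_cases hD : j ∈ D
      · have hcard : (D ∩ Set.Iio (j+1)).ncard = t + 1 := by
          rw [hiio, Set.inter_insert_of_mem hD,
            Set.ncard_insert_of_notMem (by simp) (hTfin j)]
        rw [hcard]
        calc V (j+1) ≤ c₂ * V j := (hstep j hj).2 hD
          _ ≤ c₂ * (c₁ ^ (j - t) * c₂ ^ t * V 0) :=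
              mul_le_mul_of_nonneg_left ihv hc₂.le
          _ = c₁ ^ (j + 1 - (t + 1)) * c₂ ^ (t + 1) * V 0 := by
              rw [show j + 1 - (t + 1) = j - t from by omega]; ring
      · have hcard : (D ∩ Set.Iio (j+1)).ncard = t := by
          rw [hiio, Set.inter_insert_of_notMem hD]
        rw [hcard]
        calc V (j+1) ≤ c₁ * V j := (hstep j hj).1 hD
          _ ≤ c₁ * (c₁ ^ (j - t) * c₂ ^ t * V 0) :=
              mul_le_mul_of_nonneg_left ihv hc₁.le
          _ = c₁ ^ (j + 1 - t) * c₂ ^ t * V 0 := by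
              rw [show j + 1 - t = (j - t) + 1 from by omega]; ring
  have hTk : T ≤ k := hT ▸ hTle k
  set m : ℕ := k - T with hm
  have hVk : V k ≤ c₁ ^ m * c₂ ^ T * V 0 := by
    have := key k le_rfl
    rwa [← hT] at this
  -- the scalar inequality
  set sk : ℝ := x k ⬝ᵥ x k with hsk
  set s0 : ℝ := x 0 ⬝ᵥ x 0 with hs0
  have hlow : lm * sk ≤ V k := by rw [hV k]; exact (quad_bounds hn hP.1 (x k)).1
  have hhigh : V 0 ≤ lM * s0 := by rw [hV 0]; exact (quad_bounds hn hP.1 (x 0)).2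
  have hAnn : (0:ℝ) ≤ c₁ ^ m * c₂ ^ T := by positivity
  have hs0nn : 0 ≤ s0 := by
    simp only [hs0, dotProduct]; exact Finset.sum_nonneg fun i _ => mul_self_nonneg _
  have hscalar : sk ≤ Ξ * (c₁ ^ m * c₂ ^ T) * s0 := by
    have h1 : lm * sk ≤ c₁ ^ m * c₂ ^ T * (lM * s0) :=
      le_trans hlow (le_trans hVk (by nlinarith [mul_le_mul_of_nonneg_left hhigh hAnn]))
    rw [hΞ]
    rw [div_mul_eq_mul_div, div_mul_eq_mul_div, le_div_iff₀ hlmpos]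
    nlinarith
  -- pass to square roots
  have eqm : ((k : ℝ) - (T : ℝ)) = ((m : ℕ) : ℝ) := by
    rw [hm, Nat.cast_sub hTk]
  have e1 : c₁ ^ (((k : ℝ) - (T : ℝ)) / 2) = Real.sqrt (c₁ ^ m) := by
    rw [eqm, div_eq_mul_inv, Real.rpow_mul hc₁.le, Real.rpow_natCast,
      Real.sqrt_eq_rpow, one_div]
  have e2 : c₂ ^ ((T : ℝ) / 2) = Real.sqrt (c₂ ^ T) := by
    rw [div_eq_mul_inv, Real.rpow_mul hc₂.le, Real.rpow_natCast,
      Real.sqrt_eq_rpow, one_div]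
  have eΞ : Real.sqrt Ξ ≤ Ξ ^ ((1 + (N : ℝ)) / 2) := by
    rw [Real.sqrt_eq_rpow]
    apply Real.rpow_le_rpow_of_exponent_le hΞ1
    have : (0:ℝ) ≤ (N : ℝ) := Nat.cast_nonneg N
    linarith
  have hmain : vecNorm (x k) ≤ Real.sqrt Ξ * Real.sqrt (c₁ ^ m) * Real.sqrt (c₂ ^ T)
      * vecNorm (x 0) := by
    show Real.sqrt _ ≤ _ * Real.sqrt _
    rw [← hsk, ← hs0]
    calc Real.sqrt sk ≤ Real.sqrt (Ξ * (c₁ ^ m * c₂ ^ T) * s0) := Real.sqrt_le_sqrt hscalar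
      _ = Real.sqrt Ξ * Real.sqrt (c₁ ^ m) * Real.sqrt (c₂ ^ T) * Real.sqrt s0 := by
          rw [Real.sqrt_mul (by positivity), Real.sqrt_mul (by linarith : (0:ℝ) ≤ Ξ),
            Real.sqrt_mul (by positivity)]
          ring
  calc vecNorm (x k) ≤ Real.sqrt Ξ * Real.sqrt (c₁ ^ m) * Real.sqrt (c₂ ^ T)
      * vecNorm (x 0) := hmain
    _ ≤ Ξ ^ ((1 + (N : ℝ)) / 2) * Real.sqrt (c₁ ^ m) * Real.sqrt (c₂ ^ T)
      * vecNorm (x 0) := by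
        have hvn : 0 ≤ vecNorm (x 0) := Real.sqrt_nonneg _
        have h1 : 0 ≤ Real.sqrt (c₁ ^ m) := Real.sqrt_nonneg _
        have h2 : 0 ≤ Real.sqrt (c₂ ^ T) := Real.sqrt_nonneg _
        apply mul_le_mul_of_nonneg_right _ hvn
        apply mul_le_mul_of_nonneg_right _ h2
        exact mul_le_mul_of_nonneg_right eΞ h1
    _ = Ξ ^ ((1 + (N : ℝ)) / 2) * c₁ ^ (((k : ℝ) - (T : ℝ)) / 2)
      * c₂ ^ ((T : ℝ) / 2) * vecNorm (x 0) := by rw [e1, e2]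
end

section
/- Let P be a real symmetric positive definite n×n matrix with Ξ = λ_max(P)/λ_min(P) > 1, let x : ℕ → ℝⁿ, set V(j) = x(j)ᵀ P x(j), let D ⊆ ℕ, and let c₁, c₂, η₁, η₂ be reals with 0 < c₁ < 1 < c₂ and 0 < η₁ < η₂ < 1. Fix an integer k ≥ 1 and suppose: (i) for every j < k, V(j+1) ≤ c₁ V(j) if j ∉ D and V(j+1) ≤ c₂ V(j) if j ∈ D; (ii) the total attack duration T = |D ∩ [0,k)| satisfies T/k ≤ (2 ln η₁ − ln c₁)/(ln c₂ − ln c₁); and (iii) the number N of off-to-on transitions of D in [0,k) satisfies (1 + N)/k ≤ 2(ln η₂ − ln η₁)/ln Ξ. Then ‖x(k)‖ ≤ η₂^{k} ‖x(0)‖. -/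
open Matrix

private lemma quad_eq_aux {n : ℕ} (A : Matrix (Fin n) (Fin n) ℝ) (hA : A.IsHermitian)
    (x : Fin n → ℝ) :
    x ⬝ᵥ (A *ᵥ x) = ∑ i, hA.eigenvalues i *
      ((star (hA.eigenvectorUnitary : Matrix (Fin n) (Fin n) ℝ) *ᵥ x) i)^2 := by
  set U := (hA.eigenvectorUnitary : Matrix (Fin n) (Fin n) ℝ) with hU
  set y := star U *ᵥ x with hy
  have hstar : star U = Uᵀ := (conjTranspose_eq_transpose_of_trivial U).symm ▸ rfl
  conv_lhs => rw [hA.spectral_theorem, Unitary.conjStarAlgAut_apply]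
  rw [← mulVec_mulVec, ← mulVec_mulVec, dotProduct_mulVec]
  have h1 : x ᵥ* U = y := by rw [hy, ← mulVec_transpose, hstar]
  rw [h1]
  simp only [dotProduct, mulVec, diagonal, RCLike.ofReal_real_eq_id, Function.comp, id]
  refine Finset.sum_congr rfl fun i _ => ?_
  simp only [dotProduct, of_apply]
  rw [Finset.sum_eq_single i]
  · simp only [if_true]
    have hyi : (∑ j, star U i j * x j) = y i := rfl
    rw [hyi]; ring
  · intro b _ hb; simp [hb.symm]
  · intro h; simp at h

private lemma norm_eq_aux {n : ℕ} (A : Matrix (Fin n) (Fin n) ℝ) (hA : A.IsHermitian)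
    (x : Fin n → ℝ) :
    x ⬝ᵥ x = ∑ i,
      ((star (hA.eigenvectorUnitary : Matrix (Fin n) (Fin n) ℝ) *ᵥ x) i)^2 := by
  set U := (hA.eigenvectorUnitary : Matrix (Fin n) (Fin n) ℝ) with hU
  set y := star U *ᵥ x with hy
  have h2 : ∑ i, (y i)^2 = y ⬝ᵥ y := by simp [dotProduct, sq]
  rw [h2]
  have hsT : (star U)ᵀ = U := by
    ext i j; simp [Matrix.star_apply, transpose_apply]
  symm
  rw [hy, dotProduct_mulVec, ← mulVec_transpose, hsT, mulVec_mulVec,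
    (Matrix.mem_unitaryGroup_iff).mp (hA.eigenvectorUnitary).2, one_mulVec]

private lemma quad_bounds_aux {n : ℕ} (A : Matrix (Fin n) (Fin n) ℝ) (hA : A.IsHermitian)
    (x : Fin n → ℝ) :
    (⨅ i, hA.eigenvalues i) * (x ⬝ᵥ x) ≤ x ⬝ᵥ (A *ᵥ x) ∧
      x ⬝ᵥ (A *ᵥ x) ≤ (⨆ i, hA.eigenvalues i) * (x ⬝ᵥ x) := by
  rw [quad_eq_aux A hA x, norm_eq_aux A hA x, Finset.mul_sum, Finset.mul_sum]
  constructor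
  · refine Finset.sum_le_sum fun i _ => ?_
    exact mul_le_mul_of_nonneg_right
      (ciInf_le (Set.finite_range _).bddBelow i) (sq_nonneg _)
  · refine Finset.sum_le_sum fun i _ => ?_
    exact mul_le_mul_of_nonneg_right
      (le_ciSup (Set.finite_range _).bddAbove i) (sq_nonneg _)

/-- quantitative core of Theorem 1 of the paper.
If the Lyapunov function `V(j) = x(j)ᵀ P x(j)` contracts by `c₁ < 1` on un-attacked steps,
grows by at most `c₂ > 1` on attacked steps, and the DoS signal satisfies the duration-rate
bound (Assumption 1) and the frequency bound (Assumption 2), then the state decays as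
`‖x(k)‖ ≤ η₂^k ‖x(0)‖`. -/
theorem dos_event_triggered_exponential_decay
    (n : ℕ) (hn : 0 < n)
    (P : Matrix (Fin n) (Fin n) ℝ) (hP : P.PosDef)
    (Ξ : ℝ) (hΞ : Ξ = (⨆ i, hP.1.eigenvalues i) / (⨅ i, hP.1.eigenvalues i))
    (hΞ1 : 1 < Ξ)
    (x : ℕ → Fin n → ℝ)
    (V : ℕ → ℝ) (hV : ∀ j, V j = x j ⬝ᵥ (P *ᵥ x j))
    (D : Set ℕ)
    (c₁ c₂ η₁ η₂ : ℝ)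
    (hc₁0 : 0 < c₁) (hc₁1 : c₁ < 1) (hc₂ : 1 < c₂)
    (hη₁0 : 0 < η₁) (hη₁₂ : η₁ < η₂) (hη₂1 : η₂ < 1)
    (k : ℕ) (hk : 1 ≤ k)
    (hstep : ∀ j < k, (j ∉ D → V (j + 1) ≤ c₁ * V j) ∧ (j ∈ D → V (j + 1) ≤ c₂ * V j))
    (T : ℕ) (hT : T = (D ∩ Set.Iio k).ncard)
    (hdur : (T : ℝ) / (k : ℝ)
        ≤ (2 * Real.log η₁ - Real.log c₁) / (Real.log c₂ - Real.log c₁))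
    (N : ℕ) (hN : N = ({j | j ∈ D ∧ j < k ∧ (j = 0 ∨ j - 1 ∉ D)} : Set ℕ).ncard)
    (hfreq : (1 + (N : ℝ)) / (k : ℝ)
        ≤ 2 * (Real.log η₂ - Real.log η₁) / Real.log Ξ) :
    vecNorm (x k) ≤ η₂ ^ k * vecNorm (x 0) := by
  classical
  haveI : Nonempty (Fin n) := ⟨⟨0, hn⟩⟩
  have hη₂0 : 0 < η₂ := lt_trans hη₁0 hη₁₂
  have hc₂0 : (0:ℝ) < c₂ := lt_trans one_pos hc₂
  set lam := ⨅ i, hP.1.eigenvalues i with hlam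
  set Lam := ⨆ i, hP.1.eigenvalues i with hLam
  -- positivity of the smallest eigenvalue
  have hlampos : 0 < lam := by
    obtain ⟨i₀, hi₀⟩ := Finite.exists_min hP.1.eigenvalues
    exact lt_of_lt_of_le (hP.eigenvalues_pos i₀) (le_ciInf hi₀)
  have hLamEq : Lam = Ξ * lam := by
    rw [hΞ]; field_simp
  -- nonnegativity of V
  have hVnonneg : ∀ j, 0 ≤ V j := by
    intro j
    rw [hV]
    have := hP.posSemidef.dotProduct_mulVec_nonneg (x j)
    simpa using this
  -- attacked-step counter
  set f : ℕ → ℕ := fun m => ((Finset.range m).filter (· ∈ D)).card with hf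
  have hfle : ∀ m, f m ≤ m := fun m =>
    le_trans (Finset.card_filter_le _ _) (le_of_eq (Finset.card_range m))
  have hfsucc : ∀ m, f (m+1) = f m + (if m ∈ D then 1 else 0) := by
    intro m
    simp only [hf, Finset.range_add_one, Finset.filter_insert]
    by_cases hD : m ∈ D
    · simp [hD, Finset.card_insert_of_notMem Finset.notMem_range_self]
    · simp [hD]
  -- the key Lyapunov recursion bound
  have hbound : ∀ m, m ≤ k → V m ≤ c₁ ^ (m - f m) * c₂ ^ (f m) * V 0 := by
    intro m
    induction m with
    | zero => intro _; simp [hf]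
    | succ m ih =>
      intro hm
      have hmk : m < k := hm
      have ihm := ih (Nat.le_of_succ_le hm)
      by_cases hD : m ∈ D
      · have h1 := (hstep m hmk).2 hD
        have h2 : V (m+1) ≤ c₂ * (c₁ ^ (m - f m) * c₂ ^ (f m) * V 0) :=
          le_trans h1 (mul_le_mul_of_nonneg_left ihm (le_of_lt hc₂0))
        have hfs : f (m+1) = f m + 1 := by rw [hfsucc]; simp [hD]
        rw [hfs]
        have hexp : m + 1 - (f m + 1) = m - f m := by
          have := hfle m; omega
        rw [hexp]
        have heq : c₂ * (c₁ ^ (m - f m) * c₂ ^ (f m) * V 0)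
            = c₁ ^ (m - f m) * c₂ ^ (f m + 1) * V 0 := by
          rw [pow_succ]; ring
        linarith [h2, heq.ge]
      · have h1 := (hstep m hmk).1 hD
        have h2 : V (m+1) ≤ c₁ * (c₁ ^ (m - f m) * c₂ ^ (f m) * V 0) :=
          le_trans h1 (mul_le_mul_of_nonneg_left ihm (le_of_lt hc₁0))
        have hfs : f (m+1) = f m := by rw [hfsucc]; simp [hD]
        rw [hfs]
        have hexp : m + 1 - f m = (m - f m) + 1 := by
          have := hfle m; omega
        rw [hexp]
        have heq : c₁ * (c₁ ^ (m - f m) * c₂ ^ (f m) * V 0)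
            = c₁ ^ ((m - f m) + 1) * c₂ ^ (f m) * V 0 := by
          rw [pow_succ]; ring
        linarith [h2, heq.ge]
  -- identify T with f k
  have hTf : T = f k := by
    rw [hT]
    have hset : D ∩ Set.Iio k = ↑((Finset.range k).filter (· ∈ D)) := by
      ext j
      simp [Set.mem_Iio, and_comm]
    rw [hset, Set.ncard_coe_finset]
  have hTk : T ≤ k := hTf ▸ hfle k
  have hk0 : (0:ℝ) < (k:ℝ) := by exact_mod_cast hk
  -- Step 2: duration bound gives c₁^(k-T) c₂^T ≤ η₁^(2k)
  have hlogc₁ : Real.log c₁ < 0 := Real.log_neg hc₁0 hc₁1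
  have hlogc₂ : 0 < Real.log c₂ := Real.log_pos hc₂
  have hdpos : 0 < Real.log c₂ - Real.log c₁ := by linarith
  have hdur' : (T:ℝ) * (Real.log c₂ - Real.log c₁)
      ≤ (2 * Real.log η₁ - Real.log c₁) * (k:ℝ) := (div_le_div_iff₀ hk0 hdpos).mp hdur
  have step2 : c₁ ^ (k - T) * c₂ ^ T ≤ η₁ ^ (2 * k) := by
    have hl : Real.log (c₁ ^ (k-T) * c₂ ^ T) ≤ Real.log (η₁ ^ (2*k)) := by
      rw [Real.log_mul (by positivity) (by positivity), Real.log_pow, Real.log_pow,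
        Real.log_pow]
      have hcast : ((k - T : ℕ) : ℝ) = (k:ℝ) - (T:ℝ) := by
        exact Nat.cast_sub hTk
      rw [hcast]
      push_cast
      nlinarith [hdur']
    exact (Real.log_le_log_iff (by positivity) (by positivity)).mp hl
  -- Step 3: frequency bound gives Ξ η₁^(2k) ≤ η₂^(2k)
  have hΞ0 : (0:ℝ) < Ξ := lt_trans one_pos hΞ1
  have hlogΞ : 0 < Real.log Ξ := Real.log_pos hΞ1
  have hfreq1 : (1:ℝ) / (k:ℝ) ≤ 2 * (Real.log η₂ - Real.log η₁) / Real.log Ξ := by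
    refine le_trans ?_ hfreq
    gcongr
    · linarith [Nat.cast_nonneg (α := ℝ) N]
  have hfreq' : Real.log Ξ ≤ 2 * (Real.log η₂ - Real.log η₁) * (k:ℝ) := by
    have := (div_le_div_iff₀ hk0 hlogΞ).mp hfreq1
    linarith
  have step3 : Ξ * η₁ ^ (2*k) ≤ η₂ ^ (2*k) := by
    have hl : Real.log (Ξ * η₁ ^ (2*k)) ≤ Real.log (η₂ ^ (2*k)) := by
      rw [Real.log_mul (ne_of_gt hΞ0) (by positivity), Real.log_pow, Real.log_pow]
      push_cast
      nlinarith [hfreq']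
    exact (Real.log_le_log_iff (by positivity) (by positivity)).mp hl
  -- assemble
  set A := x k ⬝ᵥ x k with hA
  set B := x 0 ⬝ᵥ x 0 with hB
  have hAnn : 0 ≤ A := Finset.sum_nonneg fun i _ => mul_self_nonneg _
  have hBnn : 0 ≤ B := Finset.sum_nonneg fun i _ => mul_self_nonneg _
  have hlow : lam * A ≤ V k := by rw [hV]; exact (quad_bounds_aux P hP.1 (x k)).1
  have hhigh : V 0 ≤ Lam * B := by rw [hV]; exact (quad_bounds_aux P hP.1 (x 0)).2
  have hVk : V k ≤ c₁ ^ (k - T) * c₂ ^ T * V 0 := by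
    have := hbound k le_rfl
    rw [hTf]; exact this
  have hVk2 : V k ≤ η₁ ^ (2*k) * V 0 :=
    le_trans hVk (mul_le_mul_of_nonneg_right step2 (hVnonneg 0))
  have hchain : lam * A ≤ lam * (Ξ * η₁ ^ (2*k) * B) := by
    have h1 : lam * A ≤ η₁ ^ (2*k) * (Lam * B) :=
      le_trans hlow (le_trans hVk2
        (mul_le_mul_of_nonneg_left hhigh (by positivity)))
    have h2 : η₁ ^ (2*k) * (Lam * B) = lam * (Ξ * η₁ ^ (2*k) * B) := by
      rw [hLamEq]; ring
    linarith [h1, h2.ge]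
  have hAB : A ≤ η₂ ^ (2*k) * B := by
    have h1 : A ≤ Ξ * η₁ ^ (2*k) * B := le_of_mul_le_mul_left hchain hlampos
    exact le_trans h1 (mul_le_mul_of_nonneg_right step3 hBnn)
  -- conclude with square roots
  have hsq : vecNorm (x k) ≤ Real.sqrt (η₂ ^ (2*k) * B) := by
    unfold vecNorm
    exact Real.sqrt_le_sqrt hAB
  have hfin : Real.sqrt (η₂ ^ (2*k) * B) = η₂ ^ k * vecNorm (x 0) := by
    unfold vecNorm
    rw [Real.sqrt_mul (by positivity)]
    congr 1
    have : η₂ ^ (2*k) = (η₂ ^ k)^2 := by rw [← pow_mul]; ring_nf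
    rw [this, Real.sqrt_sq (by positivity)]
  rw [hfin] at hsq
  exact hsq
end
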